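/- arXiv:1810.02757 — 10 statements merged into one kernel-verified Lean document; each statement's English description precedes it below -/
import Mathlib

section
/- Let A be an n×n real diagonal matrix with diagonal entries a_{11},…,a_{nn}, let b' ∈ ℝ^n and σ ∈ ℕ. Let H := {i ∈ {1,…,n} : a_{ii} ≠ 0} and let K be any subset of H of cardinality min{σ, |H|} such that |b'_i| ≥ |b'_j| for every i ∈ K and j ∈ H \ K. Define x* ∈ ℝ^n by x*_j := b'_j / a_{jj} if j ∈ K and x*_j := 0 otherwise. Then x* is an optimal solution of min{‖Ax − b'‖² : x ∈ ℝ^n, |supp(x)| ≤ σ}. -/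
open Finset

lemma sum_le_sum_of_card_le' {α : Type*} [DecidableEq α] (A B : Finset α) (f : α → ℝ)
    (hf : ∀ b ∈ B, 0 ≤ f b) (hAB : ∀ a ∈ A, ∀ b ∈ B, f a ≤ f b)
    (hcard : A.card ≤ B.card) : ∑ a ∈ A, f a ≤ ∑ b ∈ B, f b := by
  rcases A.eq_empty_or_nonempty with rfl | hA
  · simpa using Finset.sum_nonneg hf
  · have hB : B.Nonempty := Finset.card_pos.mp
      (lt_of_lt_of_le (Finset.card_pos.mpr hA) hcard)
    obtain ⟨b0, hb0, hmin⟩ := B.exists_min_image f hB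
    calc ∑ a ∈ A, f a ≤ ∑ _a ∈ A, f b0 :=
          Finset.sum_le_sum fun a ha => hAB a ha b0 hb0
      _ = A.card • f b0 := by rw [Finset.sum_const]
      _ ≤ B.card • f b0 := nsmul_le_nsmul_left (hf b0 hb0) hcard
      _ ≤ ∑ b ∈ B, f b := Finset.card_nsmul_le_sum B f _ hmin

/-- for a diagonal matrix with diagonal `a`, right-hand side `b'` and
support bound `σ`, let `H = {i : a_i ≠ 0}` and let `K ⊆ H` with
`|K| = min(σ, |H|)` such that `|b'_i| ≥ |b'_j|` for all `i ∈ K`, `j ∈ H \ K`.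
Then `x*` defined by `x*_j = b'_j / a_j` for `j ∈ K` and `x*_j = 0` otherwise is an
optimal solution of `min{‖Ax − b'‖² : |supp(x)| ≤ σ}`. -/
theorem stmt3 {n : ℕ} (a b' : Fin n → ℝ) (σ : ℕ)
    (K : Finset (Fin n))
    (hKH : ∀ i ∈ K, a i ≠ 0)
    (hKcard : K.card = min σ (Set.ncard {i | a i ≠ 0}))
    (hKord : ∀ i ∈ K, ∀ j : Fin n, a j ≠ 0 → j ∉ K → |b' j| ≤ |b' i|) :
    Set.ncard {j | (fun j => if j ∈ K then b' j / a j else 0) j ≠ 0} ≤ σ ∧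
    ∀ x : Fin n → ℝ, Set.ncard {j | x j ≠ 0} ≤ σ →
      (∑ j, (a j * (if j ∈ K then b' j / a j else 0) - b' j) ^ 2) ≤
        ∑ j, (a j * x j - b' j) ^ 2 := by
  classical
  set H : Finset (Fin n) := Finset.univ.filter (fun i => a i ≠ 0) with hH
  have hncard : Set.ncard {i | a i ≠ 0} = H.card := by
    rw [← Set.ncard_coe_finset]
    congr 1
    ext i
    simp [hH]
  have hKsub : K ⊆ H := fun i hi => by simp [hH, hKH i hi]
  have hKcard' : K.card = min σ H.card := by rw [hKcard, hncard]
  constructor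
  · have hsub : {j | (fun j => if j ∈ K then b' j / a j else 0) j ≠ 0} ⊆ (K : Set (Fin n)) := by
      intro j hj
      simp only [Set.mem_setOf_eq] at hj
      by_contra hjK
      exact hj (if_neg hjK)
    calc Set.ncard {j | (fun j => if j ∈ K then b' j / a j else 0) j ≠ 0}
        ≤ Set.ncard (K : Set (Fin n)) := Set.ncard_le_ncard hsub K.finite_toSet
      _ = K.card := Set.ncard_coe_finset K
      _ ≤ σ := by rw [hKcard']; exact min_le_left _ _
  · intro x hx
    set T : Finset (Fin n) := Finset.univ.filter (fun j => x j ≠ 0) with hTdef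
    have hT : T.card ≤ σ := by
      have : Set.ncard {j | x j ≠ 0} = T.card := by
        rw [← Set.ncard_coe_finset]
        congr 1
        ext j
        simp [hTdef]
      omega
    -- LHS equals sum over Kᶜ of b'^2
    have hLHS : (∑ j, (a j * (if j ∈ K then b' j / a j else 0) - b' j) ^ 2)
        = ∑ j ∈ Kᶜ, b' j ^ 2 := by
      rw [← Finset.sum_add_sum_compl K]
      have h1 : ∑ j ∈ K, (a j * (if j ∈ K then b' j / a j else 0) - b' j) ^ 2 = 0 :=
        Finset.sum_eq_zero fun j hj => by
          rw [if_pos hj, mul_div_cancel₀ _ (hKH j hj)]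
          ring
      have h2 : ∑ j ∈ Kᶜ, (a j * (if j ∈ K then b' j / a j else 0) - b' j) ^ 2
          = ∑ j ∈ Kᶜ, b' j ^ 2 :=
        Finset.sum_congr rfl fun j hj => by
          rw [if_neg (Finset.mem_compl.mp hj)]
          ring
      rw [h1, h2, zero_add]
    -- RHS is at least sum over U of b'^2
    set U : Finset (Fin n) := Finset.univ.filter (fun j => a j = 0 ∨ x j = 0) with hUdef
    have hRHS : ∑ j ∈ U, b' j ^ 2 ≤ ∑ j, (a j * x j - b' j) ^ 2 := by
      calc ∑ j ∈ U, b' j ^ 2 = ∑ j ∈ U, (a j * x j - b' j) ^ 2 := by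
            refine Finset.sum_congr rfl fun j hj => ?_
            have hj' : a j = 0 ∨ x j = 0 := (Finset.mem_filter.mp hj).2
            have : a j * x j = 0 := by rcases hj' with h | h <;> simp [h]
            rw [this]; ring
        _ ≤ ∑ j, (a j * x j - b' j) ^ 2 :=
            Finset.sum_le_sum_of_subset_of_nonneg (Finset.subset_univ _)
              (fun j _ _ => sq_nonneg _)
    rw [hLHS]
    refine le_trans ?_ hRHS
    -- split sums
    rw [← Finset.sum_filter_add_sum_filter_not Kᶜ (· ∈ U) (fun j => b' j ^ 2),
        ← Finset.sum_filter_add_sum_filter_not U (· ∈ K) (fun j => b' j ^ 2)]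
    have hcommon : Kᶜ.filter (· ∈ U) = U.filter (· ∉ K) := by
      ext j; simp only [Finset.mem_filter, Finset.mem_compl]; tauto
    rw [hcommon, add_comm (∑ j ∈ U.filter (· ∈ K), b' j ^ 2)]
    refine add_le_add le_rfl ?_
    set A : Finset (Fin n) := Kᶜ.filter (· ∉ U) with hAdef
    set B : Finset (Fin n) := U.filter (· ∈ K) with hBdef
    have hA_eq : A = (H ∩ T) \ K := by
      ext j
      simp only [hAdef, hUdef, hH, hTdef, Finset.mem_filter, Finset.mem_compl,
        Finset.mem_sdiff, Finset.mem_inter, Finset.mem_univ, true_and]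
      tauto
    have hB_eq : B = K \ T := by
      ext j
      simp only [hBdef, hUdef, hTdef, Finset.mem_filter, Finset.mem_sdiff,
        Finset.mem_univ, true_and, not_not]
      constructor
      · rintro ⟨h1, h2⟩; exact ⟨h2, h1.resolve_left (hKH j h2)⟩
      · rintro ⟨h1, h2⟩; exact ⟨Or.inr h2, h1⟩
    have hcard : A.card ≤ B.card := by
      have h1 : ((H ∩ T) \ K).card + ((H ∩ T) ∩ K).card = (H ∩ T).card :=
        Finset.card_sdiff_add_card_inter _ _
      have h2 : (K \ T).card + (K ∩ T).card = K.card :=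
        Finset.card_sdiff_add_card_inter _ _
      have h3 : (H ∩ T) ∩ K = K ∩ T := by
        ext j
        simp only [Finset.mem_inter]
        constructor
        · rintro ⟨⟨_, h⟩, hk⟩; exact ⟨hk, h⟩
        · rintro ⟨hk, h⟩; exact ⟨⟨hKsub hk, h⟩, hk⟩
      have h4 : (H ∩ T).card ≤ K.card := by
        rw [hKcard']
        exact le_min ((Finset.card_le_card (Finset.inter_subset_right)).trans hT)
          (Finset.card_le_card (Finset.inter_subset_left))
      rw [h3] at h1
      rw [hA_eq, hB_eq]
      omega
    refine sum_le_sum_of_card_le' A B _ (fun b _ => sq_nonneg _) ?_ hcard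
    intro i hi j hj
    rw [hA_eq] at hi
    rw [hB_eq] at hj
    obtain ⟨hiHT, hiK⟩ := Finset.mem_sdiff.mp hi
    have hia : a i ≠ 0 := (Finset.mem_filter.mp (Finset.mem_inter.mp hiHT).1).2
    have hjK : j ∈ K := (Finset.mem_sdiff.mp hj).1
    have habs : |b' i| ≤ |b' j| := hKord j hjK i hia hiK
    calc b' i ^ 2 = |b' i| ^ 2 := (sq_abs _).symm
      _ ≤ |b' j| ^ 2 := pow_le_pow_left₀ (abs_nonneg _) habs 2
      _ = b' j ^ 2 := sq_abs _
end

section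
/- Let A ∈ ℝ^{m×n} be block diagonal with blocks A^i ∈ ℝ^{m_i×n_i} for i = 1,…,h (so n = Σ n_i and m = Σ m_i), let b ∈ ℝ^m be partitioned accordingly into b^1,…,b^h, and let σ ∈ {0,…,n}. Then min{‖Ax − b‖² : x ∈ ℝ^n, |supp(x)| ≤ σ} = min{ Σ_{i=1}^h opt(i; j_i) : Σ_{i=1}^h j_i = σ, j_i ∈ {0,…,n_i} }, where opt(i; j) := min{‖A^i x^i − b^i‖² : x^i ∈ ℝ^{n_i}, |supp(x^i)| ≤ j}. -/
lemma pad_lemma {h : ℕ} (n : Fin h → ℕ) (σ : ℕ) (h2 : σ ≤ ∑ i, n i)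
    (k : Fin h → ℕ) (hk : ∀ i, k i ≤ n i) (h1 : ∑ i, k i ≤ σ) :
    ∃ j : Fin h → ℕ, (∀ i, k i ≤ j i) ∧ (∀ i, j i ≤ n i) ∧ ∑ i, j i = σ := by
  classical
  suffices H : ∀ d (k : Fin h → ℕ), (∀ i, k i ≤ n i) → ∑ i, k i ≤ σ →
      σ - ∑ i, k i = d →
      ∃ j : Fin h → ℕ, (∀ i, k i ≤ j i) ∧ (∀ i, j i ≤ n i) ∧ ∑ i, j i = σ by
    exact H _ k hk h1 rfl
  intro d
  induction d with
  | zero =>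
    intro k hk h1 hd
    exact ⟨k, fun i => le_rfl, hk, by omega⟩
  | succ d ih =>
    intro k hk h1 hd
    have hlt : ∑ i, k i < σ := by omega
    have hex : ∃ i, k i < n i := by
      by_contra hc
      push_neg at hc
      have : ∑ i, n i ≤ ∑ i, k i := Finset.sum_le_sum fun i _ => hc i
      omega
    obtain ⟨i0, hi0⟩ := hex
    set k' := Function.update k i0 (k i0 + 1) with hk'
    have hsum' : ∑ i, k' i = ∑ i, k i + 1 := by
      rw [hk', Finset.sum_update_of_mem (Finset.mem_univ i0)]
      rw [← Finset.sum_erase_add _ _ (Finset.mem_univ i0), Finset.sdiff_singleton_eq_erase]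
      ring
    have hk'le : ∀ i, k' i ≤ n i := by
      intro i
      rcases eq_or_ne i i0 with rfl | hne
      · simp only [hk', Function.update_self]; omega
      · simp [hk', Function.update_of_ne hne, hk i]
    obtain ⟨j, hkj, hjn, hjσ⟩ := ih k' hk'le (by omega) (by omega)
    refine ⟨j, fun i => ?_, hjn, hjσ⟩
    have := hkj i
    rcases eq_or_ne i i0 with rfl | hne
    · simp [hk'] at this; omega
    · simpa [hk', Function.update_of_ne hne] using this

lemma sigma_ncard {h : ℕ} {nB : Fin h → ℕ} (x : ∀ i, Fin (nB i) → ℝ) :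
    Set.ncard {p : Σ i : Fin h, Fin (nB i) | x p.1 p.2 ≠ 0}
      = ∑ i, Set.ncard {c | x i c ≠ 0} := by
  classical
  rw [Set.ncard_eq_toFinset_card']
  have heq : {p : Σ i : Fin h, Fin (nB i) | x p.1 p.2 ≠ 0}.toFinset
      = Finset.univ.sigma (fun i => {c | x i c ≠ 0}.toFinset) := by
    ext ⟨i, c⟩; simp
  rw [heq, Finset.card_sigma]
  simp [Set.ncard_eq_toFinset_card']



/-- for a block diagonal matrix `A` with blocks `A^i ∈ ℝ^{m_i × n_i}`
and conformally partitioned `b`, and `σ ≤ ∑ n_i`,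
`min{‖Ax − b‖² : |supp(x)| ≤ σ}` equals
`min{∑_i opt(i; j_i) : ∑ j_i = σ, 0 ≤ j_i ≤ n_i}`, where
`opt(i; j) = min{‖A^i x^i − b^i‖² : |supp(x^i)| ≤ j}`. -/
theorem stmt4 {h : ℕ} (mB nB : Fin h → ℕ)
    (A : ∀ i : Fin h, Matrix (Fin (mB i)) (Fin (nB i)) ℝ)
    (b : ∀ i : Fin h, Fin (mB i) → ℝ) (σ : ℕ) (hσ : σ ≤ ∑ i, nB i) :
    sInf {t : ℝ | ∃ x : ∀ i : Fin h, Fin (nB i) → ℝ,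
        Set.ncard {p : Σ i : Fin h, Fin (nB i) | x p.1 p.2 ≠ 0} ≤ σ ∧
        t = ∑ i, ∑ r, ((A i).mulVec (x i) r - b i r) ^ 2} =
    sInf {t : ℝ | ∃ j : Fin h → ℕ, (∀ i, j i ≤ nB i) ∧ (∑ i, j i) = σ ∧
        t = ∑ i, sInf {s : ℝ | ∃ xi : Fin (nB i) → ℝ,
          Set.ncard {c | xi c ≠ 0} ≤ j i ∧
          s = ∑ r, ((A i).mulVec xi r - b i r) ^ 2}} := by
  classical
  set opt : Fin h → ℕ → ℝ := fun i j => sInf {s : ℝ | ∃ xi : Fin (nB i) → ℝ,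
          Set.ncard {c | xi c ≠ 0} ≤ j ∧
          s = ∑ r, ((A i).mulVec xi r - b i r) ^ 2} with hopt
  have key : ∀ (i : Fin h) (j : ℕ),
      ({s : ℝ | ∃ xi : Fin (nB i) → ℝ, Set.ncard {c | xi c ≠ 0} ≤ j ∧
        s = ∑ r, ((A i).mulVec xi r - b i r) ^ 2}).Nonempty := by
    intro i j
    exact ⟨_, 0, by simp, rfl⟩
  have bdd : ∀ (i : Fin h) (j : ℕ),
      BddBelow {s : ℝ | ∃ xi : Fin (nB i) → ℝ, Set.ncard {c | xi c ≠ 0} ≤ j ∧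
        s = ∑ r, ((A i).mulVec xi r - b i r) ^ 2} := by
    intro i j
    refine ⟨0, ?_⟩
    rintro s ⟨xi, -, rfl⟩
    positivity
  have optnn : ∀ i j, 0 ≤ opt i j := fun i j =>
    le_csInf (key i j) (by rintro s ⟨xi, -, rfl⟩; positivity)
  set S1 : Set ℝ := {t : ℝ | ∃ x : ∀ i : Fin h, Fin (nB i) → ℝ,
        Set.ncard {p : Σ i : Fin h, Fin (nB i) | x p.1 p.2 ≠ 0} ≤ σ ∧
        t = ∑ i, ∑ r, ((A i).mulVec (x i) r - b i r) ^ 2} with hS1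
  set S2 : Set ℝ := {t : ℝ | ∃ j : Fin h → ℕ, (∀ i, j i ≤ nB i) ∧ (∑ i, j i) = σ ∧
        t = ∑ i, opt i (j i)} with hS2
  have hS1ne : S1.Nonempty := ⟨_, fun _ => 0, by simp, rfl⟩
  have hS1bdd : BddBelow S1 := by
    refine ⟨0, ?_⟩
    rintro t ⟨x, -, rfl⟩
    positivity
  obtain ⟨j0, -, hj0n, hj0σ⟩ := pad_lemma nB σ hσ (fun _ => 0) (fun i => Nat.zero_le _)
    (by simp)
  have hS2ne : S2.Nonempty := ⟨_, j0, hj0n, hj0σ, rfl⟩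
  have hS2bdd : BddBelow S2 := by
    refine ⟨0, ?_⟩
    rintro t ⟨j, -, -, rfl⟩
    exact Finset.sum_nonneg fun i _ => optnn i (j i)
  apply le_antisymm
  · -- sInf S1 ≤ sInf S2
    refine le_csInf hS2ne ?_
    rintro t ⟨j, hjn, hjσ, rfl⟩
    refine le_of_forall_pos_le_add ?_
    intro ε hε
    have hε' : (0:ℝ) < ε / (h + 1) := by positivity
    have H : ∀ i, ∃ xi : Fin (nB i) → ℝ, Set.ncard {c | xi c ≠ 0} ≤ j i ∧
        (∑ r, ((A i).mulVec xi r - b i r) ^ 2) < opt i (j i) + ε / (h + 1) := by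
      intro i
      obtain ⟨a, ⟨xi, hs, rfl⟩, hlt⟩ := Real.lt_sInf_add_pos (key i (j i)) hε'
      exact ⟨xi, hs, hlt⟩
    choose xi hsupp hlt using H
    have hmem : (∑ i, ∑ r, ((A i).mulVec (xi i) r - b i r) ^ 2) ∈ S1 := by
      refine ⟨xi, ?_, rfl⟩
      rw [sigma_ncard]
      calc ∑ i, Set.ncard {c | xi i c ≠ 0} ≤ ∑ i, j i :=
            Finset.sum_le_sum fun i _ => hsupp i
        _ = σ := hjσ
    refine (csInf_le hS1bdd hmem).trans ?_
    have : ∑ i, ∑ r, ((A i).mulVec (xi i) r - b i r) ^ 2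
        ≤ ∑ i, (opt i (j i) + ε / (h + 1)) :=
      Finset.sum_le_sum fun i _ => (hlt i).le
    rw [Finset.sum_add_distrib] at this
    refine this.trans ?_
    have hc : ∑ _i : Fin h, ε / (h + 1) = (h : ℝ) * (ε / (h + 1)) := by
      simp [Finset.sum_const, mul_comm]
    rw [hc]
    have hh1 : (0:ℝ) < (h : ℝ) + 1 := by positivity
    have hfrac : (h : ℝ) / (h + 1) ≤ 1 := by
      rw [div_le_one hh1]; linarith
    have : (h : ℝ) * (ε / (h + 1)) = ((h : ℝ) / (h + 1)) * ε := by ring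
    rw [this]
    have : ((h : ℝ) / (h + 1)) * ε ≤ 1 * ε :=
      mul_le_mul_of_nonneg_right hfrac hε.le
    linarith
  · -- sInf S2 ≤ sInf S1
    refine le_csInf hS1ne ?_
    rintro t ⟨x, hx, rfl⟩
    set k : Fin h → ℕ := fun i => Set.ncard {c | x i c ≠ 0} with hk
    have hkn : ∀ i, k i ≤ nB i := by
      intro i
      have := Set.ncard_le_ncard (Set.subset_univ {c | x i c ≠ 0}) (Set.finite_univ)
      simpa [Set.ncard_univ] using this
    have hkσ : ∑ i, k i ≤ σ := by
      rw [hk]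
      rw [← sigma_ncard x]
      exact hx
    obtain ⟨j, hkj, hjn, hjσ⟩ := pad_lemma nB σ hσ k hkn hkσ
    have hmem : (∑ i, opt i (j i)) ∈ S2 := ⟨j, hjn, hjσ, rfl⟩
    refine (csInf_le hS2bdd hmem).trans ?_
    refine Finset.sum_le_sum fun i _ => ?_
    exact csInf_le (bdd i (j i)) ⟨x i, (hkj i).trans_eq' rfl, rfl⟩
end

section
/- Let h be a positive integer, let n_1,…,n_h be positive integers, and for each i ∈ {1,…,h} and j ∈ {0,…,n_i} let val(i;j) ∈ ℝ. Let θ := max{n_i : i = 1,…,h}, let s ∈ {0,…,Σ n_i − 1}, and let j^s be an optimal solution for val(s). Then there exists an optimal solution j^{s+1} for val(s+1) that is q-close to j^s for some q ∈ {0,…,(θ−1)θ(θ+1)/2}. -/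
/-- `j` is a feasible solution for `val(σ)`: `j_i ∈ {0,…,n_i}` and `∑ j_i = σ`. -/
def IsFeasible {h : ℕ} (n : Fin h → ℕ) (σ : ℕ) (j : Fin h → ℕ) : Prop :=
  (∀ i, j i ≤ n i) ∧ (∑ i, j i) = σ

/-- `j` is an optimal solution for `val(σ)`: feasible and minimizing `∑ val i (j i)`. -/
def IsOptimal {h : ℕ} (n : Fin h → ℕ) (val : Fin h → ℕ → ℝ) (σ : ℕ)
    (j : Fin h → ℕ) : Prop :=
  IsFeasible n σ j ∧
    ∀ j' : Fin h → ℕ, IsFeasible n σ j' → (∑ i, val i (j i)) ≤ ∑ i, val i (j' i)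

lemma ordAux {ι : Type*} [DecidableEq ι] (θ : ℤ) (d : ι → ℤ) :
    ∀ (m : ℕ) (L : List ι), L.length = m →
    (∀ i ∈ L, d i ≠ 0 ∧ -θ ≤ d i ∧ d i ≤ θ) →
    ∀ c : ℤ, 1 - θ ≤ c → c ≤ θ → c + (L.map d).sum = 1 →
    ∃ L' : List ι, L'.Perm L ∧
      ∀ k, k ≤ L'.length →
        1 - θ ≤ c + ((L'.take k).map d).sum ∧ c + ((L'.take k).map d).sum ≤ θ := by
  intro m
  induction m with
  | zero =>
    intro L hlen _ c hc1 hc2 _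
    refine ⟨L, List.Perm.refl L, ?_⟩
    intro k hk
    rw [List.length_eq_zero_iff.mp hlen] at *
    simp only [List.take_nil, List.map_nil, List.sum_nil, add_zero]
    exact ⟨hc1, hc2⟩
  | succ m ih =>
    intro L hlen hmem c hc1 hc2 hsum
    by_cases hc : c ≤ 0
    · -- pick a positive element
      have hpos : ∃ x ∈ L, 0 < d x := by
        by_contra hcon
        push_neg at hcon
        have h0 : (L.map d).sum ≤ (L.map (fun _ => (0:ℤ))).sum :=
          List.sum_le_sum hcon
        simp only [List.map_const', List.sum_replicate, smul_zero] at h0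
        omega
      obtain ⟨x, hxL, hdx⟩ := hpos
      have hperm : L.Perm (x :: L.erase x) := List.perm_cons_erase hxL
      have hlen' : (L.erase x).length = m := by
        rw [List.length_erase_of_mem hxL, hlen]; rfl
      have hmem' : ∀ i ∈ L.erase x, d i ≠ 0 ∧ -θ ≤ d i ∧ d i ≤ θ :=
        fun i hi => hmem i (List.mem_of_mem_erase hi)
      have hdxθ := (hmem x hxL).2.2
      have hsum' : (c + d x) + ((L.erase x).map d).sum = 1 := by
        have := hperm.map d |>.sum_eq
        simp at this
        omega
      obtain ⟨L₂, hL₂perm, hL₂pref⟩ := ih (L.erase x) hlen' hmem' (c + d x)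
        (by omega) (by omega) hsum'
      refine ⟨x :: L₂, (hL₂perm.cons x).trans hperm.symm, ?_⟩
      intro k hk
      cases k with
      | zero =>
        simp only [List.take_zero, List.map_nil, List.sum_nil, add_zero]
        exact ⟨hc1, hc2⟩
      | succ k =>
        have := hL₂pref k (by simpa using hk)
        simp only [List.take_succ_cons, List.map_cons, List.sum_cons]
        omega
    · -- pick a negative element
      have hneg : ∃ x ∈ L, d x < 0 := by
        by_contra hcon
        push_neg at hcon
        have hLne : L ≠ [] := by
          intro h; rw [h] at hlen; simp at hlen
        obtain ⟨y, hy⟩ := List.exists_mem_of_ne_nil L hLne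
        have h1 : ∀ z ∈ L.map d, 0 < z := by
          intro z hz
          obtain ⟨x, hx, rfl⟩ := List.mem_map.mp hz
          have := (hmem x hx).1
          have := hcon x hx
          omega
        have h2 : 0 < (L.map d).sum := by
          have : d y ∈ L.map d := List.mem_map.mpr ⟨y, hy, rfl⟩
          calc (0:ℤ) < d y := h1 _ this
          _ ≤ (L.map d).sum := List.single_le_sum (fun z hz => le_of_lt (h1 z hz)) _ this
        omega
      obtain ⟨x, hxL, hdx⟩ := hneg
      have hperm : L.Perm (x :: L.erase x) := List.perm_cons_erase hxL
      have hlen' : (L.erase x).length = m := by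
        rw [List.length_erase_of_mem hxL, hlen]; rfl
      have hmem' : ∀ i ∈ L.erase x, d i ≠ 0 ∧ -θ ≤ d i ∧ d i ≤ θ :=
        fun i hi => hmem i (List.mem_of_mem_erase hi)
      have hdxθ := (hmem x hxL).2.1
      have hsum' : (c + d x) + ((L.erase x).map d).sum = 1 := by
        have := hperm.map d |>.sum_eq
        simp at this
        omega
      obtain ⟨L₂, hL₂perm, hL₂pref⟩ := ih (L.erase x) hlen' hmem' (c + d x)
        (by omega) (by omega) hsum'
      refine ⟨x :: L₂, (hL₂perm.cons x).trans hperm.symm, ?_⟩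
      intro k hk
      cases k with
      | zero =>
        simp only [List.take_zero, List.map_nil, List.sum_nil, add_zero]
        exact ⟨hc1, hc2⟩
      | succ k =>
        have := hL₂pref k (by simpa using hk)
        simp only [List.take_succ_cons, List.map_cons, List.sum_cons]
        omega

lemma cardBound {ι : Type*} [DecidableEq ι] (θ : ℤ) (hθ : 1 ≤ θ) (d : ι → ℤ) (T : Finset ι)
    (hT : ∀ i ∈ T, d i ≠ 0 ∧ -θ ≤ d i ∧ d i ≤ θ)
    (hsum : ∑ i ∈ T, d i = 1)
    (hzsf : ∀ S : Finset ι, S ⊆ T → S.Nonempty → ∑ i ∈ S, d i ≠ 0) :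
    (T.card : ℤ) ≤ 2 * θ - 1 := by
  obtain ⟨L', hperm, hpref⟩ := ordAux θ d T.card T.toList (Finset.length_toList T)
    (fun i hi => hT i (by simpa using hi)) 0 (by omega) (by omega)
    (by rw [zero_add, Finset.sum_map_toList]; exact hsum)
  have hnodup : L'.Nodup := hperm.symm.nodup T.nodup_toList
  have hmemT : ∀ i ∈ L', i ∈ T := fun i hi => by
    have := hperm.mem_iff.mp hi; simpa using this
  have hlen : L'.length = T.card := by rw [hperm.length_eq, Finset.length_toList]
  set m := T.card with hm
  have hsubsum : ∀ l : List ι, List.Sublist l L' → l ≠ [] → (l.map d).sum ≠ 0 := by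
    intro l hl hne
    have hln : l.Nodup := hl.nodup hnodup
    have : ∑ i ∈ l.toFinset, d i = (l.map d).sum := List.sum_toFinset d hln
    rw [← this]
    apply hzsf
    · intro i hi
      exact hmemT i (hl.mem (List.mem_toFinset.mp hi))
    · exact (List.toFinset_nonempty_iff l).mpr hne
  set g : ℕ → ℤ := fun k => ((L'.take k).map d).sum with hg
  have hblock : ∀ a b : ℕ, a ≤ b → (((L'.take b).drop a).map d).sum = g b - g a := by
    intro a b hab
    have h1 : (L'.take b).take a ++ (L'.take b).drop a = L'.take b :=
      List.take_append_drop a (L'.take b)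
    have h2 : (L'.take b).take a = L'.take a := by
      rw [List.take_take, min_eq_left hab]
    have := congrArg (fun l => (l.map d).sum) h1
    simp only [List.map_append, List.sum_append, h2] at this
    simp only [hg]
    omega
  have hmaps : ∀ k ∈ Finset.Icc 1 m, g k ∈ (Finset.Icc (1-θ) θ).erase 0 := by
    intro k hk
    rw [Finset.mem_Icc] at hk
    have hb := hpref k (by omega)
    rw [zero_add] at hb
    rw [Finset.mem_erase, Finset.mem_Icc]
    refine ⟨?_, hb⟩
    have : L'.take k ≠ [] := by
      intro hnil
      have := congrArg List.length hnil
      simp [hlen] at this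
      omega
    exact hsubsum _ (List.take_sublist k L') this
  have hinj : Set.InjOn g (Finset.Icc 1 m) := by
    intro a ha b hb hab
    by_contra hne
    rcases Nat.lt_or_ge a b with hlt | hge
    · have hbl := hblock a b (le_of_lt hlt)
      rw [hab, sub_self] at hbl
      have hne' : (L'.take b).drop a ≠ [] := by
        intro hnil
        have := congrArg List.length hnil
        simp only [List.length_drop, List.length_take, hlen, List.length_nil] at this
        simp only [Finset.coe_Icc, Set.mem_Icc] at hb
        omega
      exact hsubsum _ ((List.drop_sublist a _).trans (List.take_sublist b L')) hne' hbl
    · have hlt : b < a := by omega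
      have hbl := hblock b a (le_of_lt hlt)
      rw [hab, sub_self] at hbl
      have hne' : (L'.take a).drop b ≠ [] := by
        intro hnil
        have := congrArg List.length hnil
        simp only [List.length_drop, List.length_take, hlen, List.length_nil] at this
        simp only [Finset.coe_Icc, Set.mem_Icc] at ha
        omega
      exact hsubsum _ ((List.drop_sublist b _).trans (List.take_sublist a L')) hne' hbl
  have hcard := Finset.card_le_card_of_injOn g hmaps hinj
  rw [Nat.card_Icc] at hcard
  have h0mem : (0:ℤ) ∈ Finset.Icc (1-θ) θ := by rw [Finset.mem_Icc]; omega
  rw [Finset.card_erase_of_mem h0mem, Int.card_Icc] at hcard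
  have htn : ((θ + 1 - (1 - θ)).toNat : ℤ) = θ + 1 - (1 - θ) := by
    rw [Int.toNat_of_nonneg]; omega
  omega

lemma exists_feasible {h : ℕ} (n : Fin h → ℕ) :
    ∀ σ, σ ≤ ∑ i, n i → ∃ j, IsFeasible n σ j := by
  intro σ
  induction σ with
  | zero => exact fun _ => ⟨fun _ => 0, fun i => Nat.zero_le _, by simp⟩
  | succ σ ih =>
    intro hσ
    obtain ⟨j, hj1, hj2⟩ := ih (by omega)
    have hex : ∃ i, j i < n i := by
      by_contra hcon
      push_neg at hcon
      have : ∑ i, n i ≤ ∑ i, j i := Finset.sum_le_sum fun i _ => hcon i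
      omega
    obtain ⟨i, hi⟩ := hex
    classical
    refine ⟨Function.update j i (j i + 1), ?_, ?_⟩
    · intro k
      rcases eq_or_ne k i with rfl | hk
      · rw [Function.update_self]; omega
      · rw [Function.update_of_ne hk]; exact hj1 k
    · rw [Finset.sum_update_of_mem (Finset.mem_univ i)]
      have := Finset.sum_inter_add_sum_sdiff Finset.univ {i} j
      simp only [Finset.univ_inter, Finset.sum_singleton] at this
      omega

/-- Proximity of optimal solutions: given an optimal solution `j^s`
for `val(s)`, there is an optimal solution `j^{s+1}` for `val(s+1)` that is
`q`-close to `j^s` for some `q ≤ (θ-1)θ(θ+1)/2`, where `θ = max n_i`. -/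
theorem stmt5 {h : ℕ} (hh : 0 < h) (n : Fin h → ℕ) (hn : ∀ i, 0 < n i)
    (val : Fin h → ℕ → ℝ) (s : ℕ) (hs : s < ∑ i, n i)
    (js : Fin h → ℕ) (hjs : IsOptimal n val s js) :
    ∃ (j' : Fin h → ℕ) (q : ℕ),
      q ≤ (Finset.univ.sup n - 1) * Finset.univ.sup n * (Finset.univ.sup n + 1) / 2 ∧
      IsOptimal n val (s + 1) j' ∧
      (∑ i ∈ Finset.univ.filter fun i => j' i < js i, (js i - j' i)) = q := by
  classical
  obtain ⟨⟨hjsb, hjss⟩, hjsopt⟩ := hjs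
  set θ := Finset.univ.sup n with hθdef
  have i0 : Fin h := ⟨0, hh⟩
  have hθ1 : 1 ≤ θ := le_trans (hn i0) (Finset.le_sup (Finset.mem_univ i0))
  have hnθ : ∀ i, n i ≤ θ := fun i => Finset.le_sup (Finset.mem_univ i)
  set F : Finset (Fin h → ℕ) :=
    (Fintype.piFinset fun i => Finset.range (n i + 1)).filter
      (fun j => ∑ i, j i = s + 1) with hF
  have hmemF : ∀ j, j ∈ F ↔ IsFeasible n (s+1) j := by
    intro j
    simp only [hF, Finset.mem_filter, Fintype.mem_piFinset, Finset.mem_range, IsFeasible]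
    constructor
    · rintro ⟨h1, h2⟩; exact ⟨fun i => by have := h1 i; omega, h2⟩
    · rintro ⟨h1, h2⟩; exact ⟨fun i => by have := h1 i; omega, h2⟩
  have hFne : F.Nonempty := by
    obtain ⟨j, hj⟩ := exists_feasible n (s+1) (by omega)
    exact ⟨j, (hmemF j).mpr hj⟩
  obtain ⟨j₀, hj₀F, hj₀min⟩ := F.exists_min_image (fun j => ∑ i, val i (j i)) hFne
  set F' := F.filter (fun j => ∑ i, val i (j i) ≤ ∑ i, val i (j₀ i)) with hF'
  have hoptF' : ∀ j ∈ F', IsOptimal n val (s+1) j := by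
    intro j hj
    rw [hF', Finset.mem_filter] at hj
    exact ⟨(hmemF j).mp hj.1,
      fun j'' hj'' => le_trans hj.2 (hj₀min j'' ((hmemF j'').mpr hj''))⟩
  have hF'ne : F'.Nonempty :=
    ⟨j₀, by rw [hF', Finset.mem_filter]; exact ⟨hj₀F, le_refl _⟩⟩
  obtain ⟨j', hj'F', hj'min⟩ := F'.exists_min_image
    (fun j => ∑ i ∈ Finset.univ.filter fun i => j i < js i, (js i - j i)) hF'ne
  have hj'opt := hoptF' j' hj'F'
  have hj'b : ∀ i, j' i ≤ n i := hj'opt.1.1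
  have hj's : ∑ i, j' i = s + 1 := hj'opt.1.2
  have hj'val : ∑ i, val i (j' i) ≤ ∑ i, val i (j₀ i) :=
    (Finset.mem_filter.mp hj'F').2
  refine ⟨j', _, ?_, hj'opt, rfl⟩
  -- the difference vector
  set d : Fin h → ℤ := fun i => (j' i : ℤ) - js i with hd
  -- zero-sum-freeness
  have hzsf : ∀ S : Finset (Fin h), (∀ i ∈ S, d i ≠ 0) → S.Nonempty →
      ∑ i ∈ S, d i ≠ 0 := by
    intro S hSne0 hSne hS0
    have hineg : ∃ i₀ ∈ S, d i₀ < 0 := by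
      by_contra hcon
      push_neg at hcon
      have : 0 < ∑ i ∈ S, d i :=
        Finset.sum_pos (fun i hi => lt_of_le_of_ne (hcon i hi) (Ne.symm (hSne0 i hi))) hSne
      omega
    obtain ⟨i₀, hi₀S, hi₀⟩ := hineg
    simp only [hd] at hi₀
    set j₂ : Fin h → ℕ := fun i => if i ∈ S then js i else j' i with hj₂
    set j₁ : Fin h → ℕ := fun i => if i ∈ S then j' i else js i with hj₁
    -- basic sum splits over S and Sᶜ
    have hdS : ∑ i ∈ S, d i = ∑ i ∈ S, (j' i : ℤ) - ∑ i ∈ S, (js i : ℤ) := by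
      rw [← Finset.sum_sub_distrib]
    have e2S : ∑ i ∈ S, (j₂ i : ℤ) = ∑ i ∈ S, (js i : ℤ) :=
      Finset.sum_congr rfl (fun i hi => by simp [hj₂, hi])
    have e2C : ∑ i ∈ Sᶜ, (j₂ i : ℤ) = ∑ i ∈ Sᶜ, (j' i : ℤ) :=
      Finset.sum_congr rfl (fun i hi => by simp [hj₂, Finset.mem_compl.mp hi])
    have e1S : ∑ i ∈ S, (j₁ i : ℤ) = ∑ i ∈ S, (j' i : ℤ) :=
      Finset.sum_congr rfl (fun i hi => by simp [hj₁, hi])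
    have e1C : ∑ i ∈ Sᶜ, (j₁ i : ℤ) = ∑ i ∈ Sᶜ, (js i : ℤ) :=
      Finset.sum_congr rfl (fun i hi => by simp [hj₁, Finset.mem_compl.mp hi])
    have c2 := Finset.sum_add_sum_compl S (fun i => (j₂ i : ℤ))
    have c1 := Finset.sum_add_sum_compl S (fun i => (j₁ i : ℤ))
    have cj' := Finset.sum_add_sum_compl S (fun i => (j' i : ℤ))
    have cjs := Finset.sum_add_sum_compl S (fun i => (js i : ℤ))
    have hj'sZ : ∑ i, (j' i : ℤ) = (s : ℤ) + 1 := by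
      rw [← Nat.cast_sum, hj's]; push_cast; ring
    have hjssZ : ∑ i, (js i : ℤ) = (s : ℤ) := by
      rw [← Nat.cast_sum, hjss]
    -- j₂ feasible for s+1
    have hj₂sum : ∑ i, j₂ i = s + 1 := by
      have hZ : ∑ i, (j₂ i : ℤ) = (s : ℤ) + 1 := by omega
      have := hZ
      rw [← Nat.cast_sum] at this
      exact_mod_cast this
    have hj₂feas : IsFeasible n (s+1) j₂ := by
      refine ⟨fun i => ?_, hj₂sum⟩
      by_cases hi : i ∈ S <;> simp [hj₂, hi, hjsb i, hj'b i]
    -- j₁ feasible for s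
    have hj₁sum : ∑ i, j₁ i = s := by
      have hZ : ∑ i, (j₁ i : ℤ) = (s : ℤ) := by omega
      rw [← Nat.cast_sum] at hZ
      exact_mod_cast hZ
    have hj₁feas : IsFeasible n s j₁ := by
      refine ⟨fun i => ?_, hj₁sum⟩
      by_cases hi : i ∈ S <;> simp [hj₁, hi, hjsb i, hj'b i]
    -- value identity
    have hval : ∑ i, val i (j₁ i) + ∑ i, val i (j₂ i)
        = ∑ i, val i (js i) + ∑ i, val i (j' i) := by
      rw [← Finset.sum_add_distrib, ← Finset.sum_add_distrib]
      apply Finset.sum_congr rfl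
      intro i _
      by_cases hi : i ∈ S
      · simp [hj₁, hj₂, hi, add_comm]
      · simp [hj₁, hj₂, hi, add_comm]
    have hjs_le := hjsopt j₁ hj₁feas
    have hval2 : ∑ i, val i (j₂ i) ≤ ∑ i, val i (j' i) := by linarith
    have hj₂F' : j₂ ∈ F' := by
      rw [hF', Finset.mem_filter]
      exact ⟨(hmemF j₂).mpr hj₂feas, le_trans hval2 hj'val⟩
    have hmin := hj'min j₂ hj₂F'
    -- compare the q-values
    set A := Finset.univ.filter (fun i => j' i < js i) with hA
    have hA₂ : (Finset.univ.filter fun i => j₂ i < js i) = A \ S := by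
      ext i
      simp only [Finset.mem_filter, Finset.mem_sdiff, Finset.mem_univ, true_and, hA]
      by_cases hi : i ∈ S <;> simp [hj₂, hi]
    have hA₂sum : ∑ i ∈ A \ S, (js i - j₂ i) = ∑ i ∈ A \ S, (js i - j' i) :=
      Finset.sum_congr rfl (fun i hi => by
        simp [hj₂, (Finset.mem_sdiff.mp hi).2])
    have hsplitA := Finset.sum_inter_add_sum_sdiff A S (fun i => js i - j' i)
    have hposint : 0 < ∑ i ∈ A ∩ S, (js i - j' i) := by
      apply Finset.sum_pos'
      · intro i _; omega
      · refine ⟨i₀, ?_, ?_⟩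
        · rw [Finset.mem_inter, hA, Finset.mem_filter]
          have : j' i₀ < js i₀ := by
            have : (j' i₀ : ℤ) < js i₀ := by omega
            exact_mod_cast this
          exact ⟨⟨Finset.mem_univ i₀, this⟩, hi₀S⟩
        · have : (j' i₀ : ℤ) < js i₀ := by omega
          have : j' i₀ < js i₀ := by exact_mod_cast this
          omega
    rw [hA₂, hA₂sum] at hmin
    omega
  -- apply the cardinality bound
  set T := Finset.univ.filter (fun i => d i ≠ 0) with hT
  have hθZ1 : 1 ≤ (θ:ℤ) := by exact_mod_cast hθ1
  have hdbounds : ∀ i, -(θ:ℤ) ≤ d i ∧ d i ≤ (θ:ℤ) := by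
    intro i
    have h1 : (j' i : ℤ) ≤ (θ:ℤ) := by
      have := le_trans (hj'b i) (hnθ i); exact_mod_cast this
    have h2 : (js i : ℤ) ≤ (θ:ℤ) := by
      have := le_trans (hjsb i) (hnθ i); exact_mod_cast this
    have h3 : (0:ℤ) ≤ (j' i : ℤ) := Int.natCast_nonneg _
    have h4 : (0:ℤ) ≤ (js i : ℤ) := Int.natCast_nonneg _
    constructor <;> [skip; skip] <;> simp only [hd] <;> omega
  have hj'sZ : ∑ i, (j' i : ℤ) = (s : ℤ) + 1 := by
    rw [← Nat.cast_sum, hj's]; push_cast; ring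
  have hjssZ : ∑ i, (js i : ℤ) = (s : ℤ) := by
    rw [← Nat.cast_sum, hjss]
  have hdsum : ∑ i ∈ T, d i = 1 := by
    rw [hT, Finset.sum_filter_ne_zero]
    simp only [hd, Finset.sum_sub_distrib]
    omega
  have hcard := cardBound (θ:ℤ) hθZ1 d T
    (fun i hi => ⟨(Finset.mem_filter.mp hi).2, hdbounds i⟩) hdsum
    (fun S hST hSne => hzsf S (fun i hi => (Finset.mem_filter.mp (hST hi)).2) hSne)
  -- split T into negative and positive parts
  set A := Finset.univ.filter (fun i => j' i < js i) with hA
  set Tneg := Finset.univ.filter (fun i => d i < 0) with hTneg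
  set Tpos := Finset.univ.filter (fun i => 0 < d i) with hTpos
  have hAneg : A = Tneg := by
    ext i
    simp only [hA, hTneg, Finset.mem_filter, Finset.mem_univ, true_and, hd]
    constructor
    · intro hlt
      have : (j' i : ℤ) < js i := by exact_mod_cast hlt
      omega
    · intro hlt
      have : (j' i : ℤ) < js i := by omega
      exact_mod_cast this
  have hTdisj : Disjoint Tneg Tpos := by
    rw [Finset.disjoint_left]
    intro i hi1 hi2
    rw [hTneg, Finset.mem_filter] at hi1
    rw [hTpos, Finset.mem_filter] at hi2
    omega
  have hTunion : T = Tneg ∪ Tpos := by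
    ext i
    simp only [hT, hTneg, hTpos, Finset.mem_union, Finset.mem_filter, Finset.mem_univ,
      true_and]
    omega
  have hcards : T.card = Tneg.card + Tpos.card := by
    rw [hTunion, Finset.card_union_of_disjoint hTdisj]
  set q : ℕ := ∑ i ∈ A, (js i - j' i) with hq
  have hqZ : (q : ℤ) = ∑ i ∈ A, ((js i : ℤ) - j' i) := by
    rw [hq, Nat.cast_sum]
    apply Finset.sum_congr rfl
    intro i hi
    have hlt : j' i < js i := (Finset.mem_filter.mp hi).2
    omega
  have hqTneg : (q:ℤ) = ∑ i ∈ Tneg, (-(d i)) := by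
    rw [hqZ, hAneg]
    apply Finset.sum_congr rfl
    intro i _
    simp only [hd]
    ring
  have hqle : (q:ℤ) ≤ (Tneg.card : ℤ) * (θ:ℤ) := by
    rw [hqTneg]
    calc ∑ i ∈ Tneg, (-(d i)) ≤ ∑ i ∈ Tneg, (θ:ℤ) :=
          Finset.sum_le_sum (fun i _ => by have := (hdbounds i).1; omega)
    _ = (Tneg.card : ℤ) * (θ:ℤ) := by rw [Finset.sum_const, nsmul_eq_mul]
  have hTsum : ∑ i ∈ Tneg, d i + ∑ i ∈ Tpos, d i = 1 := by
    rw [← Finset.sum_union hTdisj, ← hTunion, hdsum]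
  have hnegq : ∑ i ∈ Tneg, d i = -(q:ℤ) := by
    rw [hqTneg, ← Finset.sum_neg_distrib]
    simp
  have hqpos : ∑ i ∈ Tpos, d i = 1 + (q:ℤ) := by omega
  have hqP : 1 + (q:ℤ) ≤ (Tpos.card:ℤ) * (θ:ℤ) := by
    rw [← hqpos]
    calc ∑ i ∈ Tpos, d i ≤ ∑ i ∈ Tpos, (θ:ℤ) :=
          Finset.sum_le_sum (fun i _ => (hdbounds i).2)
    _ = (Tpos.card:ℤ) * (θ:ℤ) := by rw [Finset.sum_const, nsmul_eq_mul]
  have hfinal : (q:ℤ) ≤ ((θ:ℤ) - 1) * (θ:ℤ) := by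
    have hc : (Tneg.card : ℤ) + Tpos.card ≤ 2*(θ:ℤ) - 1 := by
      have : ((T.card : ℕ) : ℤ) = (Tneg.card : ℤ) + Tpos.card := by
        rw [hcards]; push_cast; ring
      omega
    by_cases hcase : (Tneg.card:ℤ) ≤ (θ:ℤ) - 1
    · calc (q:ℤ) ≤ (Tneg.card:ℤ) * (θ:ℤ) := hqle
      _ ≤ ((θ:ℤ) - 1) * (θ:ℤ) := mul_le_mul_of_nonneg_right hcase (by omega)
    · have hP : (Tpos.card:ℤ) ≤ (θ:ℤ) - 1 := by omega
      have := mul_le_mul_of_nonneg_right hP (show (0:ℤ) ≤ (θ:ℤ) by omega)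
      omega
  have hq2 : q ≤ (θ-1)*θ := by
    have hcast : (((θ-1)*θ : ℕ) : ℤ) = ((θ:ℤ)-1)*(θ:ℤ) := by
      rw [Nat.cast_mul, Nat.cast_sub hθ1]
      norm_num
    have h5 := hfinal
    rw [← hcast] at h5
    exact_mod_cast h5
  refine le_trans hq2 ?_
  rw [Nat.le_div_iff_mul_le (by norm_num : 0 < 2)]
  exact Nat.mul_le_mul_left ((θ-1)*θ) (by omega)
end

section
/- Let h be a positive integer, let n_1,…,n_h be positive integers, and for each i ∈ {1,…,h} and j ∈ {0,…,n_i} let val(i;j) ∈ ℝ. Let θ := max{n_i : i = 1,…,h}, let s ∈ {0,…,Σ n_i − 1}, and let j^s be an optimal solution for val(s). Then there exists an optimal solution j^{s+1} for val(s+1) with Σ_{i=1}^h |j^{s+1}_i − j^s_i| ≤ (θ−1)θ(θ+1) + 1. -/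
/-!
Among the optimal solutions for `val(s+1)` take one, `j'`, closest to `j^s` in `ℓ¹`, and put
`d := j' - j^s`, so that `∑ d = 1` and `|d_i| ≤ θ`. If some nonempty set `S` of indices with
`d_i ≠ 0` had `∑_{i ∈ S} d_i = 0`, swapping the entries of `j'` and `j^s` on `S` would produce
optimal solutions for `val(s+1)` and `val(s)` again (the two costs add up to the same total), the
first one strictly closer to `j^s`. So the support `T` of `d` is zero-sum free. Removing the
elements of `T` one at a time, always one whose sign agrees with the current sum, keeps all
partial sums in `[1 - θ, θ]`, and they are pairwise distinct by zero-sum freeness; hence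
`|T| + 1 ≤ 2θ` and `∑ |d_i| ≤ (2θ - 1)θ ≤ (θ - 1)θ(θ + 1) + 1`.
-/

open Finset

section ZeroSumFree

variable {ι : Type*}

def ZeroSumFree {M : Type*} [AddCommMonoid M] (d : ι → M) (T : Finset ι) : Prop :=
  ∀ S ⊆ T, S.Nonempty → ∑ i ∈ S, d i ≠ 0

theorem ZeroSumFree.mono {M : Type*} [AddCommMonoid M] {d : ι → M} {T U : Finset ι}
    (hT : ZeroSumFree d T) (hUT : U ⊆ T) : ZeroSumFree d U :=
  fun S hSU hS => hT S (hSU.trans hUT) hS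

variable [DecidableEq ι] {d : ι → ℤ} {θ : ℤ}

theorem exists_sum_erase_mem_Icc {U : Finset ι} (hU : ∑ i ∈ U, d i ≠ 0)
    (hθ : ∀ i ∈ U, |d i| ≤ θ) (hsum : ∑ i ∈ U, d i ∈ Icc (1 - θ) θ) :
    ∃ i ∈ U, ∑ x ∈ U.erase i, d x ∈ Icc (1 - θ) θ := by
  rw [mem_Icc] at hsum
  rcases hU.lt_or_gt with hneg | hpos
  · obtain ⟨i, hi, hdi⟩ := exists_lt_of_sum_lt (f := d) (g := 0) (by simpa using hneg)
    have := abs_le.mp (hθ i hi)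
    rw [Pi.zero_apply] at hdi
    exact ⟨i, hi, by rw [sum_erase_eq_sub hi, mem_Icc]; constructor <;> omega⟩
  · obtain ⟨i, hi, hdi⟩ := exists_lt_of_sum_lt (f := 0) (g := d) (by simpa using hpos)
    have := abs_le.mp (hθ i hi)
    rw [Pi.zero_apply] at hdi
    exact ⟨i, hi, by rw [sum_erase_eq_sub hi, mem_Icc]; constructor <;> omega⟩

theorem ZeroSumFree.exists_subset_sums {U : Finset ι} (hU : ZeroSumFree d U)
    (hθ : ∀ i ∈ U, |d i| ≤ θ) (hsum : ∑ i ∈ U, d i ∈ Icc (1 - θ) θ) :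
    ∃ A : Finset ℤ, A ⊆ Icc (1 - θ) θ ∧ #A = #U + 1 ∧
      ∀ a ∈ A, ∃ V ⊆ U, ∑ i ∈ V, d i = a := by
  induction U using Finset.strongInduction with
  | _ U ih =>
  rcases U.eq_empty_or_nonempty with rfl | hne
  · exact ⟨{0}, by simpa using hsum, rfl, by simp⟩
  obtain ⟨i, hi, hsum'⟩ := exists_sum_erase_mem_Icc (hU U subset_rfl hne) hθ hsum
  obtain ⟨A, hA, hcard, hsums⟩ := ih _ (erase_ssubset hi) (hU.mono (erase_subset i U))
    (fun x hx => hθ x (mem_of_mem_erase hx)) hsum'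
  have hnot : ∑ x ∈ U, d x ∉ A := by
    intro hmem
    obtain ⟨V, hV, hVsum⟩ := hsums _ hmem
    have hVU : V ⊆ U := hV.trans (erase_subset i U)
    refine hU (U \ V) sdiff_subset ⟨i, mem_sdiff.mpr ⟨hi, fun h => ?_⟩⟩ ?_
    · simpa using hV h
    · rw [sum_sdiff_eq_sub hVU, hVsum, sub_self]
  refine ⟨insert (∑ x ∈ U, d x) A, insert_subset hsum hA, ?_, ?_⟩
  · rw [card_insert_of_notMem hnot, hcard, card_erase_add_one hi]
  · simp only [mem_insert, forall_eq_or_imp]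
    exact ⟨⟨U, subset_rfl, rfl⟩, fun a ha =>
      let ⟨V, hV, hVa⟩ := hsums a ha; ⟨V, hV.trans (erase_subset i U), hVa⟩⟩

theorem ZeroSumFree.card_add_one_le {T : Finset ι} (hT : ZeroSumFree d T)
    (hθ : ∀ i ∈ T, |d i| ≤ θ) (hsum : ∑ i ∈ T, d i ∈ Icc (1 - θ) θ) :
    (#T : ℤ) + 1 ≤ 2 * θ := by
  obtain ⟨A, hA, hcard, -⟩ := hT.exists_subset_sums hθ hsum
  have := card_le_card hA
  rw [hcard, Int.card_Icc] at this
  omega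

end ZeroSumFree

section Exchange

variable {h : ℕ} {n : Fin h → ℕ} {val : Fin h → ℕ → ℝ} {σ τ : ℕ}

theorem IsFeasible.exists_succ {j : Fin h → ℕ} (hj : IsFeasible n σ j)
    (hσ : σ < ∑ i, n i) : ∃ k, IsFeasible n (σ + 1) k := by
  obtain ⟨i, -, hi⟩ := exists_lt_of_sum_lt (hj.2 ▸ hσ)
  refine ⟨j + Pi.single i 1, fun k => ?_, ?_⟩
  · rcases eq_or_ne k i with rfl | hk
    · simpa using hi
    · simpa [hk] using hj.1 k
  · simp only [Pi.add_apply]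
    rw [sum_add_distrib, sum_pi_single', hj.2, if_pos (mem_univ i)]

theorem setOf_isFeasible_finite (n : Fin h → ℕ) (σ : ℕ) : {j | IsFeasible n σ j}.Finite :=
  (Set.Finite.pi (t := fun i => Set.Iic (n i)) fun _ => Set.finite_Iic _).subset
    fun _ hj => Set.mem_univ_pi.mpr hj.1

theorem IsFeasible.exists_isOptimal {k : Fin h → ℕ} (hk : IsFeasible n σ k)
    (val : Fin h → ℕ → ℝ) : ∃ j, IsOptimal n val σ j := by
  obtain ⟨j, hj, hmin⟩ := Set.exists_min_image _ (fun j => ∑ i, val i (j i))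
    (setOf_isFeasible_finite n σ) ⟨k, hk⟩
  exact ⟨j, hj, hmin⟩

theorem IsFeasible.piecewise {S : Finset (Fin h)} {j k : Fin h → ℕ} (hj : IsFeasible n σ j)
    (hk : IsFeasible n τ k) (hS : ∑ i ∈ S, j i = ∑ i ∈ S, k i) :
    IsFeasible n τ (S.piecewise j k) := by
  refine ⟨fun i => ?_, ?_⟩
  · by_cases hi : i ∈ S <;> simp [hi, hj.1 i, hk.1 i]
  · rw [sum_piecewise, univ_inter, hS, ← compl_eq_univ_sdiff, sum_add_sum_compl, hk.2]

theorem sum_val_piecewise_add (S : Finset (Fin h)) (j k : Fin h → ℕ) :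
    ∑ i, val i (S.piecewise j k i) + ∑ i, val i (S.piecewise k j i) =
      ∑ i, val i (j i) + ∑ i, val i (k i) := by
  rw [← sum_add_distrib, ← sum_add_distrib]
  refine sum_congr rfl fun i _ => ?_
  by_cases hi : i ∈ S <;> simp [hi, add_comm]

theorem IsOptimal.piecewise {S : Finset (Fin h)} {j k : Fin h → ℕ} (hj : IsOptimal n val σ j)
    (hk : IsOptimal n val τ k) (hS : ∑ i ∈ S, j i = ∑ i ∈ S, k i) :
    IsOptimal n val τ (S.piecewise j k) := by
  have hjk := hj.2 _ (hk.1.piecewise hj.1 hS.symm)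
  have := sum_val_piecewise_add (val := val) S j k
  exact ⟨hj.1.piecewise hk.1 hS, fun k' hk' => by linarith [hk.2 k' hk']⟩

theorem IsOptimal.zeroSumFree_of_isClosest {js j : Fin h → ℕ} (hjs : IsOptimal n val σ js)
    (hj : IsOptimal n val τ j)
    (hclosest : ∀ k, IsOptimal n val τ k →
      ∑ i, ((j i : ℤ) - js i).natAbs ≤ ∑ i, ((k i : ℤ) - js i).natAbs) :
    ZeroSumFree (fun i => (j i : ℤ) - js i) {i | (j i : ℤ) - js i ≠ 0} := by
  intro S hST ⟨i₀, hi₀⟩ hS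
  have hSnat : ∑ i ∈ S, js i = ∑ i ∈ S, j i := by
    rw [sum_sub_distrib, sub_eq_zero] at hS
    exact_mod_cast hS.symm
  have hcloser : ∑ i, ((S.piecewise js j i : ℤ) - js i).natAbs <
      ∑ i, ((j i : ℤ) - js i).natAbs := by
    refine sum_lt_sum (fun i _ => ?_) ⟨i₀, mem_univ _, ?_⟩
    · by_cases hi : i ∈ S <;> simp [hi]
    · have := (mem_filter.mp (hST hi₀)).2
      simp only [piecewise_eq_of_mem _ _ _ hi₀, sub_self, Int.natAbs_zero]
      omega
  exact (hclosest _ (hjs.piecewise hj hSnat)).not_gt hcloser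

end Exchange

theorem Nat.mul_le_cubic_of_add_one_le_two_mul {t θ : ℕ} (ht : t + 1 ≤ 2 * θ) :
    t * θ ≤ (θ - 1) * θ * (θ + 1) + 1 := by
  obtain ⟨k, rfl⟩ : ∃ k, θ = k + 1 := ⟨θ - 1, by omega⟩
  rw [Nat.add_sub_cancel]
  have := Nat.mul_le_mul_right (k + 1) (show t ≤ 2 * k + 1 by omega)
  nlinarith [Nat.le_mul_self k]

theorem stmt6_general {h : ℕ} (n : Fin h → ℕ)
    (val : Fin h → ℕ → ℝ) (s : ℕ) (hs : s < ∑ i, n i)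
    (js : Fin h → ℕ) (hjs : IsOptimal n val s js) :
    ∃ j' : Fin h → ℕ,
      IsOptimal n val (s + 1) j' ∧
      (∑ i, ((j' i : ℤ) - (js i : ℤ)).natAbs) ≤
        (Finset.univ.sup n - 1) * Finset.univ.sup n * (Finset.univ.sup n + 1) + 1 := by
  set θ := univ.sup n
  obtain ⟨k, hk⟩ := hjs.1.exists_succ hs
  obtain ⟨j₀, hj₀⟩ := hk.exists_isOptimal val
  obtain ⟨j', hj', hclosest⟩ := Set.exists_min_image {j | IsOptimal n val (s + 1) j}
    (fun j => ∑ i, ((j i : ℤ) - js i).natAbs)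
    ((setOf_isFeasible_finite n (s + 1)).subset fun _ hj => hj.1) ⟨j₀, hj₀⟩
  refine ⟨j', hj', ?_⟩
  set d : Fin h → ℤ := fun i => (j' i : ℤ) - js i
  set T : Finset (Fin h) := {i | d i ≠ 0}
  have hθ : ∀ i, |d i| ≤ θ := fun i => by
    have := hjs.1.1 i; have := hj'.1.1 i; have : n i ≤ θ := le_sup (mem_univ i)
    exact abs_le.mpr ⟨by simp only [d]; omega, by simp only [d]; omega⟩
  have hsum : ∑ i ∈ T, d i = 1 := by
    rw [sum_filter_ne_zero, sum_sub_distrib]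
    have := hjs.1.2; have := hj'.1.2
    push_cast [← Nat.cast_sum]
    omega
  have hθ_pos : 1 ≤ θ := by
    obtain ⟨i, -, hi⟩ := exists_lt_of_sum_lt (f := 0) (s := T) (g := d) (by simp [hsum])
    have := abs_le.mp (hθ i); rw [Pi.zero_apply] at hi; omega
  have hcard : (#T : ℤ) + 1 ≤ 2 * θ :=
    (hjs.zeroSumFree_of_isClosest hj' hclosest).card_add_one_le (fun i _ => hθ i)
      (by rw [hsum, mem_Icc]; omega)
  calc ∑ i, (d i).natAbs
      = ∑ i ∈ T, (d i).natAbs := (sum_filter_of_ne fun _ _ h => by simpa using h).symm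
    _ ≤ #T * θ := by
      simpa using sum_le_card_nsmul T _ θ fun i _ => by have := abs_le.mp (hθ i); omega
    _ ≤ (θ - 1) * θ * (θ + 1) + 1 := Nat.mul_le_cubic_of_add_one_le_two_mul (by omega)

/-- given an optimal solution `j^s` for `val(s)`, there is an optimal
solution `j^{s+1}` for `val(s+1)` with `∑ |j^{s+1}_i - j^s_i| ≤ (θ-1)θ(θ+1) + 1`,
where `θ = max n_i`. -/
theorem stmt6 {h : ℕ} (hh : 0 < h) (n : Fin h → ℕ) (hn : ∀ i, 0 < n i)
    (val : Fin h → ℕ → ℝ) (s : ℕ) (hs : s < ∑ i, n i)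
    (js : Fin h → ℕ) (hjs : IsOptimal n val s js) :
    ∃ j' : Fin h → ℕ,
      IsOptimal n val (s + 1) j' ∧
      (∑ i, ((j' i : ℤ) - (js i : ℤ)).natAbs) ≤
        (Finset.univ.sup n - 1) * Finset.univ.sup n * (Finset.univ.sup n + 1) + 1 :=
  stmt6_general n val s hs js hjs
end

section
/- Let h be a positive integer, let n_1,…,n_h be positive integers, and for each i ∈ {1,…,h} and j ∈ {0,…,n_i} let val(i;j) ∈ ℝ. Let θ := max n_i and θ̄ := (θ−1)θ(θ+1)/2. Suppose j^s is optimal for val(s) and j^{s+1} is optimal for val(s+1). Let u, v be positive integers, let Ĩ^+ be a subset of {i : j^{s+1}_i − j^s_i = u} with |Ĩ^+| = v, and let Ĩ^- be a subset of {i : j^s_i − j^{s+1}_i = v} with |Ĩ^-| = u. Define j̃^{s+1} by j̃^{s+1}_i := j^s_i for i ∈ Ĩ^+ ∪ Ĩ^- and j̃^{s+1}_i := j^{s+1}_i otherwise. Then j̃^{s+1} is feasible for val(s+1) and is also optimal for val(s+1). -/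
lemma sum_if_mem {h : ℕ} {M : Type*} [AddCommMonoid M] (S : Finset (Fin h))
    (f g : Fin h → M) :
    ∑ i, (if i ∈ S then f i else g i) = ∑ i ∈ S, f i + ∑ i ∈ Sᶜ, g i := by
  rw [Finset.sum_ite]
  congr 1
  · congr 1; ext i; simp
  · congr 1; ext i; simp

/-- exchange step: if `j^s` is optimal for `val(s)`, `j^{s+1}` is
optimal for `val(s+1)`, `u, v > 0`, `Ĩ⁺ ⊆ {i : j^{s+1}_i - j^s_i = u}` with
`|Ĩ⁺| = v`, and `Ĩ⁻ ⊆ {i : j^s_i - j^{s+1}_i = v}` with `|Ĩ⁻| = u`, then the tuple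
`j̃^{s+1}` agreeing with `j^s` on `Ĩ⁺ ∪ Ĩ⁻` and with `j^{s+1}` elsewhere is
feasible and optimal for `val(s+1)`. -/
theorem stmt9 {h : ℕ} (n : Fin h → ℕ) (val : Fin h → ℕ → ℝ) (s : ℕ)
    (js j1 : Fin h → ℕ) (hjs : IsOptimal n val s js) (hj1 : IsOptimal n val (s + 1) j1)
    (u v : ℕ) (hu : 0 < u) (hv : 0 < v)
    (Ip Im : Finset (Fin h))
    (hIp : ∀ i ∈ Ip, j1 i = js i + u) (hIpcard : Ip.card = v)
    (hIm : ∀ i ∈ Im, js i = j1 i + v) (hImcard : Im.card = u) :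
    IsFeasible n (s + 1) (fun i => if i ∈ Ip ∪ Im then js i else j1 i) ∧
    IsOptimal n val (s + 1) (fun i => if i ∈ Ip ∪ Im then js i else j1 i) := by
  obtain ⟨⟨hsle, hssum⟩, hsopt⟩ := hjs
  obtain ⟨⟨h1le, h1sum⟩, h1opt⟩ := hj1
  set S : Finset (Fin h) := Ip ∪ Im with hS
  -- Ip and Im are disjoint
  have hdisj : Disjoint Ip Im := by
    rw [Finset.disjoint_left]
    intro i hip him
    have := hIp i hip
    have := hIm i him
    omega
  -- key sum equality on S
  have hkey : ∑ i ∈ S, js i = ∑ i ∈ S, j1 i := by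
    rw [hS, Finset.sum_union hdisj, Finset.sum_union hdisj]
    have h1 : ∑ i ∈ Ip, j1 i = (∑ i ∈ Ip, js i) + v * u := by
      rw [Finset.sum_congr rfl hIp, Finset.sum_add_distrib, Finset.sum_const,
        hIpcard, smul_eq_mul]
    have h2 : ∑ i ∈ Im, js i = (∑ i ∈ Im, j1 i) + u * v := by
      rw [Finset.sum_congr rfl hIm, Finset.sum_add_distrib, Finset.sum_const,
        hImcard, smul_eq_mul]
    rw [h1, h2]; ring
  -- feasibility of the exchanged tuple
  have hfeas : IsFeasible n (s + 1) (fun i => if i ∈ S then js i else j1 i) := by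
    constructor
    · intro i
      by_cases hi : i ∈ S <;> simp [hi, hsle i, h1le i]
    · rw [sum_if_mem, hkey, ← sum_if_mem]
      simpa using h1sum
  -- the reverse-exchanged tuple is feasible for s
  have hgfeas : IsFeasible n s (fun i => if i ∈ S then j1 i else js i) := by
    constructor
    · intro i
      by_cases hi : i ∈ S <;> simp [hi, hsle i, h1le i]
    · rw [sum_if_mem, ← hkey, ← sum_if_mem]
      simpa using hssum
  -- by optimality of js, the value on S can only improve
  have hval : ∑ i ∈ S, val i (js i) ≤ ∑ i ∈ S, val i (j1 i) := by
    have := hsopt _ hgfeas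
    rw [show (∑ i, val i ((fun i => if i ∈ S then j1 i else js i) i))
        = ∑ i, (if i ∈ S then val i (j1 i) else val i (js i)) by
          apply Finset.sum_congr rfl; intro i _; by_cases hi : i ∈ S <;> simp [hi]] at this
    rw [sum_if_mem] at this
    have hsplit : ∑ i, val i (js i) = ∑ i ∈ S, val i (js i) + ∑ i ∈ Sᶜ, val i (js i) :=
      (Finset.sum_add_sum_compl S _).symm
    rw [hsplit] at this
    linarith
  refine ⟨hfeas, hfeas, ?_⟩
  intro j' hj'
  have hle1 : (∑ i, val i (if i ∈ S then js i else j1 i)) ≤ ∑ i, val i (j1 i) := by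
    rw [show (∑ i, val i (if i ∈ S then js i else j1 i))
        = ∑ i, (if i ∈ S then val i (js i) else val i (j1 i)) by
          apply Finset.sum_congr rfl; intro i _; by_cases hi : i ∈ S <;> simp [hi]]
    rw [sum_if_mem]
    have hsplit : ∑ i, val i (j1 i) = ∑ i ∈ S, val i (j1 i) + ∑ i ∈ Sᶜ, val i (j1 i) :=
      (Finset.sum_add_sum_compl S _).symm
    rw [hsplit]
    linarith
  exact le_trans hle1 (h1opt j' hj')
end

section
/- Let h be a positive integer, let n_1,…,n_h be positive integers, and for each i ∈ {1,…,h} and j ∈ {0,…,n_i} let val(i;j) ∈ ℝ. Let θ := max n_i, θ̄ := (θ−1)θ(θ+1)/2, let s ∈ {0,…,Σ n_i − 1}, and let j^s be optimal for val(s). Then val(s+1) = val(s) + min{ d(j^s, j') : j' ∈ Aug(j^s) }; in particular, some element of Aug(j^s) is optimal for val(s+1). -/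
/-- The optimal value `val(σ)`. -/
noncomputable def valOf {h : ℕ} (n : Fin h → ℕ) (val : Fin h → ℕ → ℝ) (σ : ℕ) : ℝ :=
  sInf {t : ℝ | ∃ j : Fin h → ℕ, IsFeasible n σ j ∧ t = ∑ i, val i (j i)}

/-- `j'` is `q`-close to `j`: `∑_{i ∈ I⁻}(j_i - j'_i) = q` where `I⁻ = {i : j'_i < j_i}`. -/
def IsQClose {h : ℕ} (j j' : Fin h → ℕ) (q : ℕ) : Prop :=
  (∑ i ∈ Finset.univ.filter fun i => j' i < j i, (j i - j' i)) = q

/-- `Aug(j^s)`: feasible solutions for `val(s+1)` that are `q`-close to `j^s`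
for some `q ≤ θ̄ = (θ-1)θ(θ+1)/2`. -/
def Aug {h : ℕ} (n : Fin h → ℕ) (s : ℕ) (js : Fin h → ℕ) (j' : Fin h → ℕ) : Prop :=
  IsFeasible n (s + 1) j' ∧
    ∃ q ≤ (Finset.univ.sup n - 1) * Finset.univ.sup n * (Finset.univ.sup n + 1) / 2,
      IsQClose js j' q

/-- `d(j^s, j^{s+1}) = ∑_{i ∈ I⁺ ∪ I⁻} (val(i; j^{s+1}_i) - val(i; j^s_i))`. -/
noncomputable def dVal {h : ℕ} (val : Fin h → ℕ → ℝ) (js j' : Fin h → ℕ) : ℝ :=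
  ∑ i ∈ Finset.univ.filter fun i => j' i ≠ js i, (val i (j' i) - val i (js i))

section auxiliary
variable {h : ℕ}

lemma sum_ite_univ_aux {M : Type*} [AddCommMonoid M] (U : Finset (Fin h))
    (f g : Fin h → M) :
    ∑ i, (if i ∈ U then f i else g i) = (∑ i ∈ U, f i) + ∑ i ∈ Uᶜ, g i := by
  rw [← Finset.sum_add_sum_compl U (fun i => if i ∈ U then f i else g i)]
  congr 1
  · exact Finset.sum_congr rfl fun i hi => by simp [hi]
  · exact Finset.sum_congr rfl fun i hi => by simp [Finset.mem_compl.mp hi]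

lemma feasible_exists_aux (n : Fin h → ℕ) :
    ∀ σ, σ ≤ ∑ i, n i → ∃ j, IsFeasible n σ j := by
  intro σ
  induction σ with
  | zero => exact fun _ => ⟨fun _ => 0, fun i => Nat.zero_le _, by simp⟩
  | succ σ ih =>
    intro hσ
    obtain ⟨j, hj1, hj2⟩ := ih (by omega)
    have hex : ∃ i, j i < n i := by
      by_contra hcon
      push_neg at hcon
      have : ∑ i, n i ≤ ∑ i, j i := Finset.sum_le_sum fun i _ => hcon i
      omega
    obtain ⟨i, hi⟩ := hex
    refine ⟨Function.update j i (j i + 1), ?_, ?_⟩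
    · intro i'
      rcases eq_or_ne i' i with rfl | hne
      · simpa using hi
      · simpa [Function.update_of_ne hne] using hj1 i'
    · rw [Finset.sum_update_of_mem (Finset.mem_univ i)]
      have h2 := Finset.sum_eq_sum_sdiff_singleton_add (Finset.mem_univ i) j
      omega

lemma optimal_exists_aux (n : Fin h → ℕ) (val : Fin h → ℕ → ℝ) (σ : ℕ)
    (hσ : σ ≤ ∑ i, n i) : ∃ j, IsOptimal n val σ j := by
  classical
  obtain ⟨j0, hj0⟩ := feasible_exists_aux n σ hσ
  have hmem : ∀ j : Fin h → ℕ,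
      j ∈ (Fintype.piFinset fun i => Finset.range (n i + 1)).filter
        (fun j => ∑ i, j i = σ) ↔ IsFeasible n σ j := by
    intro j
    simp only [Finset.mem_filter, Fintype.mem_piFinset, Finset.mem_range, IsFeasible]
    constructor
    · rintro ⟨h1, h2⟩; exact ⟨fun i => by have := h1 i; omega, h2⟩
    · rintro ⟨h1, h2⟩; exact ⟨fun i => by have := h1 i; omega, h2⟩
  obtain ⟨k, hkF, hkmin⟩ := Finset.exists_min_image _ (fun j => ∑ i, val i (j i))
    ⟨j0, (hmem j0).mpr hj0⟩
  exact ⟨k, (hmem k).mp hkF, fun j' hj' => hkmin j' ((hmem j').mpr hj')⟩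

lemma valOf_opt_aux (n : Fin h → ℕ) (val : Fin h → ℕ → ℝ) (σ : ℕ)
    {j : Fin h → ℕ} (hj : IsOptimal n val σ j) :
    valOf n val σ = ∑ i, val i (j i) := by
  apply le_antisymm
  · exact csInf_le ⟨∑ i, val i (j i), by rintro t ⟨j', hj', rfl⟩; exact hj.2 j' hj'⟩
      ⟨j, hj.1, rfl⟩
  · exact le_csInf ⟨_, j, hj.1, rfl⟩ (by rintro t ⟨j', hj', rfl⟩; exact hj.2 j' hj')

lemma dVal_eq_aux (val : Fin h → ℕ → ℝ) (js j' : Fin h → ℕ) :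
    dVal val js j' = (∑ i, val i (j' i)) - ∑ i, val i (js i) := by
  rw [dVal]
  rw [Finset.sum_subset (Finset.filter_subset _ _) (fun i _ hi => by
    simp only [Finset.mem_filter, Finset.mem_univ, true_and, not_not] at hi
    rw [hi]; ring)]
  rw [Finset.sum_sub_distrib]

/-- Pigeonhole on prefix sums: two multisets of integers in `[1,θ]` with sums
`q+1` and `q`, where `q` is large, have a common nonzero subset sum. -/
lemma subset_sum_aux (A B : Finset (Fin h)) (a b : Fin h → ℕ) (θ q : ℕ)
    (haθ : ∀ i ∈ A, 1 ≤ a i ∧ a i ≤ θ) (hbθ : ∀ i ∈ B, 1 ≤ b i ∧ b i ≤ θ)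
    (haA : ∑ i ∈ A, a i = q + 1) (hbB : ∑ i ∈ B, b i = q)
    (hθ1 : 1 ≤ θ) (hcon : (θ-1)*θ*(θ+1) < q * 2) :
    ∃ S T : Finset (Fin h), S ⊆ B ∧ T ⊆ A ∧ 1 ≤ ∑ i ∈ S, b i ∧
      ∑ i ∈ T, a i = ∑ i ∈ S, b i := by
  classical
  -- B has at least θ elements
  have hq1 : q ≤ B.card * θ := by
    rw [← hbB]
    calc ∑ i ∈ B, b i ≤ B.card • θ :=
          Finset.sum_le_card_nsmul _ _ _ (fun i hi => (hbθ i hi).2)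
      _ = B.card * θ := by rw [smul_eq_mul]
  have hBcard : θ ≤ B.card := by
    by_contra hc; push_neg at hc
    have h2 : B.card * θ ≤ (θ-1)*θ := Nat.mul_le_mul_right θ (by omega)
    have h3 : (θ-1)*θ*2 ≤ (θ-1)*θ*(θ+1) := Nat.mul_le_mul_left _ (by omega)
    have h4 : q * 2 ≤ (θ-1)*θ*2 := Nat.mul_le_mul_right 2 (le_trans hq1 h2)
    omega
  -- prefix sums
  set α : ℕ → ℕ := fun x => ∑ i ∈ A, if (i : ℕ) < x then a i else 0 with hα
  set β : ℕ → ℕ := fun t => ∑ i ∈ B, if (i : ℕ) < t then b i else 0 with hβ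
  have hα0 : α 0 = 0 := by simp [hα]
  have hαh : α h = q + 1 := by
    rw [← haA]; simp only [hα]
    exact Finset.sum_congr rfl fun i _ => if_pos i.isLt
  have hβle : ∀ t, β t ≤ q := fun t => by
    rw [← hbB]; simp only [hβ]
    exact Finset.sum_le_sum fun i _ => by split_ifs <;> omega
  have hβmono : ∀ {t t'}, t ≤ t' → β t ≤ β t' := fun {t t'} htt => by
    simp only [hβ]
    exact Finset.sum_le_sum fun i _ => by split_ifs <;> omega
  have hαstep : ∀ x, α (x+1) ≤ α x + θ := by
    intro x
    have h1 : α (x+1) = α x + ∑ i ∈ A.filter (fun i : Fin h => (i:ℕ) = x), a i := by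
      rw [Finset.sum_filter]; simp only [hα]
      rw [← Finset.sum_add_distrib]
      exact Finset.sum_congr rfl fun i _ => by split_ifs <;> omega
    have hcard : (A.filter (fun i : Fin h => (i:ℕ) = x)).card ≤ 1 :=
      Finset.card_le_one.mpr (fun i hi i' hi' => by
        simp only [Finset.mem_filter] at hi hi'
        exact Fin.ext (by omega))
    have h2 : ∑ i ∈ A.filter (fun i : Fin h => (i:ℕ) = x), a i ≤ θ := by
      calc ∑ i ∈ A.filter (fun i : Fin h => (i:ℕ) = x), a i
          ≤ (A.filter (fun i : Fin h => (i:ℕ) = x)).card • θ :=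
            Finset.sum_le_card_nsmul _ _ _
              (fun i hi => (haθ i (Finset.mem_filter.mp hi).1).2)
        _ ≤ 1 * θ := by rw [smul_eq_mul]; exact Nat.mul_le_mul_right θ hcard
        _ = θ := one_mul θ
    omega
  -- findGreatest
  set f : ℕ → ℕ := fun t => Nat.findGreatest (fun x => α x ≤ β t) h with hf
  have hfspec : ∀ t, α (f t) ≤ β t := by
    intro t
    exact Nat.findGreatest_spec (P := fun x => α x ≤ β t) (Nat.zero_le h)
      (by show α 0 ≤ β t; rw [hα0]; exact Nat.zero_le _)
  have hfle : ∀ t, f t ≤ h := fun t => Nat.findGreatest_le (P := fun x => α x ≤ β t) h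
  have hflt : ∀ t, f t < h := by
    intro t
    rcases Nat.lt_or_ge (f t) h with h' | h'
    · exact h'
    · exfalso
      have h1 : f t = h := le_antisymm (hfle t) h'
      have h2 := hfspec t
      rw [h1, hαh] at h2
      have := hβle t; omega
  have hfub : ∀ t, β t < α (f t) + θ := by
    intro t
    have h1 : ¬ (α (f t + 1) ≤ β t) :=
      Nat.findGreatest_is_greatest (P := fun x => α x ≤ β t)
        (Nat.lt_succ_self _) (hflt t)
    have := hαstep (f t); omega
  have hfmono : ∀ {t t'}, t ≤ t' → f t ≤ f t' := by
    intro t t' htt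
    exact Nat.le_findGreatest (P := fun x => α x ≤ β t') (hfle t)
      (le_trans (hfspec t) (hβmono htt))
  -- pigeonhole on sample points
  set samp : Finset ℕ := insert 0 (B.image fun i : Fin h => (i:ℕ)+1) with hsamp
  have hsampcard : samp.card = B.card + 1 := by
    rw [hsamp, Finset.card_insert_of_notMem (by simp),
      Finset.card_image_of_injOn (fun i _ i' _ hii => Fin.ext (by omega))]
  have hmaps : ∀ t ∈ samp, β t - α (f t) ∈ Finset.range θ := fun t ht => by
    rw [Finset.mem_range]
    have := hfub t; have := hfspec t; omega
  obtain ⟨t1, ht1, t2, ht2, hne, hdeq⟩ :=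
    Finset.exists_ne_map_eq_of_card_lt_of_maps_to
      (by rw [Finset.card_range, hsampcard]; omega) hmaps
  obtain ⟨u1, u2, hu12, hu1s, hu2s, hdeq⟩ :
      ∃ u1 u2, u1 < u2 ∧ u1 ∈ samp ∧ u2 ∈ samp ∧
        β u1 - α (f u1) = β u2 - α (f u2) := by
    rcases lt_or_gt_of_ne hne with h' | h'
    · exact ⟨t1, t2, h', ht1, ht2, hdeq⟩
    · exact ⟨t2, t1, h', ht2, ht1, hdeq.symm⟩
  obtain ⟨i2, hi2B, hu2⟩ : ∃ i2 ∈ B, u2 = (i2:ℕ) + 1 := by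
    have hu2ne : u2 ≠ 0 := by omega
    simp only [hsamp, Finset.mem_insert, Finset.mem_image] at hu2s
    rcases hu2s with rfl | ⟨i2, hi2, rfl⟩
    · omega
    · exact ⟨i2, hi2, rfl⟩
  refine ⟨B.filter (fun i : Fin h => u1 ≤ (i:ℕ) ∧ (i:ℕ) < u2),
    A.filter (fun i : Fin h => f u1 ≤ (i:ℕ) ∧ (i:ℕ) < f u2),
    Finset.filter_subset _ _, Finset.filter_subset _ _, ?_, ?_⟩
  · have hi2S : i2 ∈ B.filter (fun i : Fin h => u1 ≤ (i:ℕ) ∧ (i:ℕ) < u2) := by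
      rw [Finset.mem_filter]; exact ⟨hi2B, by omega, by omega⟩
    exact le_trans (hbθ i2 hi2B).1
      (Finset.single_le_sum (fun _ _ => Nat.zero_le _) hi2S)
  · have hβsplit : β u2 = β u1 +
        ∑ i ∈ B.filter (fun i : Fin h => u1 ≤ (i:ℕ) ∧ (i:ℕ) < u2), b i := by
      rw [Finset.sum_filter]; simp only [hβ]
      rw [← Finset.sum_add_distrib]
      exact Finset.sum_congr rfl fun i _ => by split_ifs <;> omega
    have hff : f u1 ≤ f u2 := hfmono (le_of_lt hu12)
    have hαsplit : α (f u2) = α (f u1) +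
        ∑ i ∈ A.filter (fun i : Fin h => f u1 ≤ (i:ℕ) ∧ (i:ℕ) < f u2), a i := by
      rw [Finset.sum_filter]; simp only [hα]
      rw [← Finset.sum_add_distrib]
      exact Finset.sum_congr rfl fun i _ => by split_ifs <;> omega
    have e1 := hfspec u1
    have e2 := hfspec u2
    omega

/-- The exchange step: from equal subset sums of deficits and surpluses,
produce an optimal solution for `s+1` strictly closer to `js`. -/
lemma exchange_aux (n : Fin h → ℕ) (val : Fin h → ℕ → ℝ) (s : ℕ)
    (js k : Fin h → ℕ) (hjs : IsOptimal n val s js) (hk : IsOptimal n val (s+1) k)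
    (S T : Finset (Fin h))
    (hSsub : S ⊆ Finset.univ.filter (fun i => k i < js i))
    (hTsub : T ⊆ Finset.univ.filter (fun i => js i < k i))
    (hST : ∑ i ∈ T, (k i - js i) = ∑ i ∈ S, (js i - k i)) :
    ∃ k' q', IsOptimal n val (s+1) k' ∧ IsQClose js k' q' ∧
      q' + ∑ i ∈ S, (js i - k i)
        = ∑ i ∈ Finset.univ.filter (fun i => k i < js i), (js i - k i) := by
  classical
  have hkf := hk.1
  have hjsf := hjs.1
  set B : Finset (Fin h) := Finset.univ.filter (fun i => k i < js i) with hB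
  have hSB : ∀ i ∈ S, k i < js i := fun i hi => by
    have := hSsub hi; rw [Finset.mem_filter] at this; exact this.2
  have hTA : ∀ i ∈ T, js i < k i := fun i hi => by
    have := hTsub hi; rw [Finset.mem_filter] at this; exact this.2
  have hdisjST : Disjoint S T := Finset.disjoint_left.mpr fun i hiS hiT => by
    have := hSB i hiS; have := hTA i hiT; omega
  set U : Finset (Fin h) := S ∪ T with hU
  set k' : Fin h → ℕ := fun i => if i ∈ U then js i else k i with hk'
  set j' : Fin h → ℕ := fun i => if i ∈ U then k i else js i with hj'
  -- sum decompositions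
  have e1 : ∑ i ∈ U, k i = ∑ i ∈ S, k i + ∑ i ∈ T, k i := Finset.sum_union hdisjST
  have e2 : ∑ i ∈ U, js i = ∑ i ∈ S, js i + ∑ i ∈ T, js i := Finset.sum_union hdisjST
  have e3 : ∑ i ∈ S, js i = ∑ i ∈ S, k i + ∑ i ∈ S, (js i - k i) := by
    rw [← Finset.sum_add_distrib]
    exact Finset.sum_congr rfl fun i hi => by have := hSB i hi; omega
  have e4 : ∑ i ∈ T, k i = ∑ i ∈ T, js i + ∑ i ∈ T, (k i - js i) := by
    rw [← Finset.sum_add_distrib]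
    exact Finset.sum_congr rfl fun i hi => by have := hTA i hi; omega
  have e5 : ∑ i ∈ U, k i + ∑ i ∈ Uᶜ, k i = s + 1 := by
    rw [Finset.sum_add_sum_compl]; exact hkf.2
  have e6 : ∑ i ∈ U, js i + ∑ i ∈ Uᶜ, js i = s := by
    rw [Finset.sum_add_sum_compl]; exact hjsf.2
  have hk'sum : ∑ i, k' i = s + 1 := by
    simp only [hk']; rw [sum_ite_univ_aux]; omega
  have hj'sum : ∑ i, j' i = s := by
    simp only [hj']; rw [sum_ite_univ_aux]; omega
  have hk'f : IsFeasible n (s+1) k' := by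
    refine ⟨fun i => ?_, hk'sum⟩
    simp only [hk']; split_ifs
    exacts [hjsf.1 i, hkf.1 i]
  have hj'f : IsFeasible n s j' := by
    refine ⟨fun i => ?_, hj'sum⟩
    simp only [hj']; split_ifs
    exacts [hkf.1 i, hjsf.1 i]
  -- cost identity
  have c1 : ∑ i, val i (j' i) = ∑ i ∈ U, val i (k i) + ∑ i ∈ Uᶜ, val i (js i) := by
    rw [← sum_ite_univ_aux U (fun i => val i (k i)) (fun i => val i (js i))]
    refine Finset.sum_congr rfl fun i _ => ?_
    simp only [hj']; split_ifs <;> rfl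
  have c2 : ∑ i, val i (k' i) = ∑ i ∈ U, val i (js i) + ∑ i ∈ Uᶜ, val i (k i) := by
    rw [← sum_ite_univ_aux U (fun i => val i (js i)) (fun i => val i (k i))]
    refine Finset.sum_congr rfl fun i _ => ?_
    simp only [hk']; split_ifs <;> rfl
  have c3 := Finset.sum_add_sum_compl U (fun i => val i (js i))
  have c4 := Finset.sum_add_sum_compl U (fun i => val i (k i))
  have hk'le : ∑ i, val i (k' i) ≤ ∑ i, val i (k i) := by
    have := hjs.2 j' hj'f; linarith
  have hk'opt : IsOptimal n val (s+1) k' :=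
    ⟨hk'f, fun j'' hj'' => le_trans hk'le (hk.2 j'' hj'')⟩
  -- the new q value
  have hfil : (Finset.univ.filter fun i => k' i < js i) = B \ S := by
    ext i
    rw [Finset.mem_filter, Finset.mem_sdiff]
    simp only [Finset.mem_univ, true_and, hk']
    by_cases hiU : i ∈ U
    · rw [if_pos hiU]
      simp only [lt_self_iff_false, false_iff, not_and, not_not]
      intro hiB
      rcases Finset.mem_union.mp hiU with h' | h'
      · exact h'
      · exfalso
        rw [hB, Finset.mem_filter] at hiB
        have := hTA i h'; omega
    · rw [if_neg hiU]
      constructor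
      · intro hlt
        refine ⟨by rw [hB, Finset.mem_filter]; exact ⟨Finset.mem_univ i, hlt⟩,
          fun hiS => hiU (Finset.mem_union_left _ hiS)⟩
      · rintro ⟨hiB, -⟩
        rw [hB, Finset.mem_filter] at hiB
        exact hiB.2
  have hq' : ∑ i ∈ Finset.univ.filter (fun i => k' i < js i), (js i - k' i)
      = ∑ i ∈ B \ S, (js i - k i) := by
    rw [hfil]
    refine Finset.sum_congr rfl fun i hi => ?_
    rw [Finset.mem_sdiff] at hi
    have hiT : i ∉ T := fun h' => by
      rw [hB, Finset.mem_filter] at hi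
      have := hTA i h'; omega
    have hiU : i ∉ U := fun h' => (Finset.mem_union.mp h').elim hi.2 hiT
    simp only [hk', if_neg hiU]
  have hsd : ∑ i ∈ B \ S, (js i - k i) + ∑ i ∈ S, (js i - k i)
      = ∑ i ∈ B, (js i - k i) := Finset.sum_sdiff hSsub
  exact ⟨k', _, hk'opt, rfl, by rw [hq']; exact hsd⟩

/-- Key lemma: some optimal solution for `s+1` is `q`-close to `js` with `q ≤ θ̄`. -/
lemma key_lemma_aux (hh : 0 < h) (n : Fin h → ℕ) (hn : ∀ i, 0 < n i)
    (val : Fin h → ℕ → ℝ) (s : ℕ)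
    (js : Fin h → ℕ) (hjs : IsOptimal n val s js)
    (hopt : ∃ k, IsOptimal n val (s+1) k) :
    ∃ k q, IsOptimal n val (s+1) k ∧ IsQClose js k q ∧
      q ≤ (Finset.univ.sup n - 1) * Finset.univ.sup n * (Finset.univ.sup n + 1) / 2 := by
  classical
  obtain ⟨k0, hk0⟩ := hopt
  set θ : ℕ := Finset.univ.sup n with hθdef
  have hθn : ∀ i, n i ≤ θ := fun i => Finset.le_sup (Finset.mem_univ i)
  have hθ1 : 1 ≤ θ := le_trans (hn ⟨0, hh⟩) (hθn ⟨0, hh⟩)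
  have hex : ∃ q, ∃ k, IsOptimal n val (s+1) k ∧ IsQClose js k q := ⟨_, k0, hk0, rfl⟩
  obtain ⟨q, ⟨k, hk, hkq⟩, hqmin⟩ :
      ∃ q, (∃ k, IsOptimal n val (s+1) k ∧ IsQClose js k q) ∧
        ∀ m, (∃ k, IsOptimal n val (s+1) k ∧ IsQClose js k m) → q ≤ m :=
    ⟨Nat.find hex, Nat.find_spec hex, fun m hm => Nat.find_min' hex hm⟩
  refine ⟨k, q, hk, hkq, ?_⟩
  by_contra hcon
  push_neg at hcon
  rw [Nat.div_lt_iff_lt_mul (by norm_num)] at hcon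
  have hkf := hk.1
  have hjsf := hjs.1
  have hbB : ∑ i ∈ Finset.univ.filter (fun i => k i < js i), (js i - k i) = q := hkq
  have haθ : ∀ i ∈ Finset.univ.filter (fun i => js i < k i),
      1 ≤ k i - js i ∧ k i - js i ≤ θ := by
    intro i hi
    simp only [Finset.mem_filter, Finset.mem_univ, true_and] at hi
    have h1 := hkf.1 i; have h2 := hθn i
    omega
  have hbθ : ∀ i ∈ Finset.univ.filter (fun i => k i < js i),
      1 ≤ js i - k i ∧ js i - k i ≤ θ := by
    intro i hi
    simp only [Finset.mem_filter, Finset.mem_univ, true_and] at hi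
    have h1 := hjsf.1 i; have h2 := hθn i
    omega
  have hdisjAB : Disjoint (Finset.univ.filter (fun i => js i < k i))
      (Finset.univ.filter (fun i => k i < js i)) :=
    Finset.disjoint_left.mpr fun i h1 h2 => by
      simp only [Finset.mem_filter] at h1 h2; omega
  -- the sum of surpluses is q + 1
  have haA : ∑ i ∈ Finset.univ.filter (fun i => js i < k i), (k i - js i) = q + 1 := by
    have h1 : (∑ i, ((k i : ℤ) - js i)) = 1 := by
      rw [Finset.sum_sub_distrib]
      have e1 : ((∑ i, k i : ℕ) : ℤ) = ∑ i, (k i : ℤ) := by push_cast; rfl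
      have e2 : ((∑ i, js i : ℕ) : ℤ) = ∑ i, (js i : ℤ) := by push_cast; rfl
      rw [← e1, ← e2, hkf.2, hjsf.2]; push_cast; ring
    have h3 : ∑ i ∈ (Finset.univ.filter (fun i => js i < k i)) ∪
          (Finset.univ.filter (fun i => k i < js i)), ((k i : ℤ) - js i)
        = ∑ i, ((k i : ℤ) - js i) :=
      Finset.sum_subset (Finset.subset_univ _) (fun i _ hi => by
        simp only [Finset.mem_union, Finset.mem_filter, Finset.mem_univ,
          true_and] at hi
        push_neg at hi
        have : k i = js i := by omega
        rw [this]; ring)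
    have h4 : ∑ i ∈ (Finset.univ.filter (fun i => js i < k i)) ∪
          (Finset.univ.filter (fun i => k i < js i)), ((k i : ℤ) - js i)
        = (∑ i ∈ Finset.univ.filter (fun i => js i < k i), ((k i - js i : ℕ) : ℤ))
          - ∑ i ∈ Finset.univ.filter (fun i => k i < js i), ((js i - k i : ℕ) : ℤ) := by
      rw [Finset.sum_union hdisjAB, sub_eq_add_neg, ← Finset.sum_neg_distrib]
      congr 1
      · refine Finset.sum_congr rfl fun i hi => ?_
        simp only [Finset.mem_filter, Finset.mem_univ, true_and] at hi
        omega
      · refine Finset.sum_congr rfl fun i hi => ?_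
        simp only [Finset.mem_filter, Finset.mem_univ, true_and] at hi
        omega
    have h5 : ((∑ i ∈ Finset.univ.filter (fun i => js i < k i), (k i - js i) : ℕ) : ℤ)
        = ∑ i ∈ Finset.univ.filter (fun i => js i < k i), ((k i - js i : ℕ) : ℤ) := by
      push_cast; rfl
    have h6 : ((∑ i ∈ Finset.univ.filter (fun i => k i < js i), (js i - k i) : ℕ) : ℤ)
        = ∑ i ∈ Finset.univ.filter (fun i => k i < js i), ((js i - k i : ℕ) : ℤ) := by
      push_cast; rfl
    omega
  obtain ⟨S, T, hSsub, hTsub, hSpos, hST⟩ :=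
    subset_sum_aux (Finset.univ.filter (fun i => js i < k i))
      (Finset.univ.filter (fun i => k i < js i))
      (fun i => k i - js i) (fun i => js i - k i) θ q haθ hbθ haA hbB hθ1 hcon
  obtain ⟨k', q', hk'opt, hk'close, hq'⟩ :=
    exchange_aux n val s js k hjs hk S T hSsub hTsub hST
  have hmin := hqmin q' ⟨k', hk'opt, hk'close⟩
  omega

end auxiliary

/-- if `j^s` is optimal for `val(s)`, then
`val(s+1) = val(s) + min{d(j^s, j') : j' ∈ Aug(j^s)}`, and some element of
`Aug(j^s)` is optimal for `val(s+1)`. -/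
theorem stmt10 {h : ℕ} (hh : 0 < h) (n : Fin h → ℕ) (hn : ∀ i, 0 < n i)
    (val : Fin h → ℕ → ℝ) (s : ℕ) (hs : s < ∑ i, n i)
    (js : Fin h → ℕ) (hjs : IsOptimal n val s js) :
    valOf n val (s + 1) =
      valOf n val s + sInf {t : ℝ | ∃ j' : Fin h → ℕ, Aug n s js j' ∧ t = dVal val js j'} ∧
    ∃ j' : Fin h → ℕ, Aug n s js j' ∧ IsOptimal n val (s + 1) j' := by
  classical
  obtain ⟨k, q, hk, hkclose, hkq⟩ :=
    key_lemma_aux hh n hn val s js hjs (optimal_exists_aux n val (s+1) (by omega))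
  have haug : Aug n s js k := ⟨hk.1, q, hkq, hkclose⟩
  have hvs : valOf n val s = ∑ i, val i (js i) := valOf_opt_aux n val s hjs
  have hvs1 : valOf n val (s+1) = ∑ i, val i (k i) := valOf_opt_aux n val (s+1) hk
  have hmemD : (∑ i, val i (k i)) - ∑ i, val i (js i) ∈
      {t : ℝ | ∃ j' : Fin h → ℕ, Aug n s js j' ∧ t = dVal val js j'} :=
    ⟨k, haug, (dVal_eq_aux val js k).symm⟩
  have hlb : ∀ t ∈ {t : ℝ | ∃ j' : Fin h → ℕ, Aug n s js j' ∧ t = dVal val js j'},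
      (∑ i, val i (k i)) - (∑ i, val i (js i)) ≤ t := by
    rintro t ⟨j', haug', rfl⟩
    rw [dVal_eq_aux]
    have := hk.2 j' haug'.1
    linarith
  have hsinf : sInf {t : ℝ | ∃ j' : Fin h → ℕ, Aug n s js j' ∧ t = dVal val js j'}
      = (∑ i, val i (k i)) - ∑ i, val i (js i) :=
    le_antisymm (csInf_le ⟨_, hlb⟩ hmemD) (le_csInf ⟨_, hmemD⟩ hlb)
  refine ⟨?_, k, haug, hk⟩
  rw [hvs, hvs1, hsinf]; ring
end

section
/- Let h be a positive integer, let n_1,…,n_h be positive integers, and for each i ∈ {1,…,h} and j ∈ {0,…,n_i} let val(i;j) ∈ ℝ. Let θ := max n_i and θ̄ := (θ−1)θ(θ+1)/2. Let 𝒟 := { d(j^s, j^{s+1}) : s ∈ {0,…,Σ n_i − 1}, j^s feasible for val(s), j^{s+1} ∈ Aug(j^s) }. Then |𝒟| ≤ Σ_{q=0}^{θ̄} binom(q+h, q+1) · binom(q+h−1, q) · θ^{2q+1}. -/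
/-!
A value `d(j, j')` only sees the coordinates that change. Writing `a = (j' - j)₊`,
`c = (j - j')₊` and `w = min j j'` there, `d(j, j') = ∑ᵢ (val(i; wᵢ + aᵢ) - val(i; wᵢ + cᵢ))`.
If `j'` is `q`-close to `j` then `∑ c = q` and, as `∑ j' = ∑ j + 1`, `∑ a = q + 1`; stars and
bars gives `C(q+h, q+1)` choices of `a` and `C(q+h-1, q)` of `c`. At most `2q + 1` coordinates
change, and on each of them `wᵢ < max(jᵢ, j'ᵢ) ≤ θ`, so there are at most `θ^(2q+1)` choices of `w`.
-/

open Finset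

theorem Finset.Nat.card_antidiagonalTuple (k m : ℕ) :
    #(Finset.Nat.antidiagonalTuple k m) = (k + m - 1).choose m := by
  rw [← Fintype.card_coe, Fintype.card_congr <| (Equiv.subtypeEquivRight fun _ =>
    Finset.Nat.mem_antidiagonalTuple).trans (Sym.equivNatSumOfFintype (Fin k) m).symm,
    Sym.card_sym_eq_choose, Fintype.card_fin]

theorem card_filter_ne_zero_le_sum {ι : Type*} (s : Finset ι) (f : ι → ℕ) :
    #(s.filter (f · ≠ 0)) ≤ ∑ i ∈ s, f i :=
  calc #(s.filter (f · ≠ 0)) = ∑ _ ∈ s.filter (f · ≠ 0), 1 := card_eq_sum_ones _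
    _ ≤ ∑ i ∈ s.filter (f · ≠ 0), f i :=
        sum_le_sum fun _ hi => Nat.one_le_iff_ne_zero.mpr (mem_filter.mp hi).2
    _ ≤ ∑ i ∈ s, f i := sum_le_sum_of_subset (filter_subset _ _)

theorem sum_tsub_add_sum_eq {ι : Type*} (s : Finset ι) (f g : ι → ℕ) :
    ∑ i ∈ s, (g i - f i) + ∑ i ∈ s, f i = ∑ i ∈ s, (f i - g i) + ∑ i ∈ s, g i := by
  rw [← sum_add_distrib, ← sum_add_distrib]
  exact sum_congr rfl fun i _ => by omega

theorem dVal_eq_sum {h : ℕ} (val : Fin h → ℕ → ℝ) (js j' : Fin h → ℕ) :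
    dVal val js j' = ∑ i, (val i (j' i) - val i (js i)) :=
  sum_filter_of_ne fun _ _ hi => by contrapose! hi; rw [hi, sub_self]

theorem IsQClose.sum_tsub_eq {h : ℕ} {j j' : Fin h → ℕ} {q : ℕ} (hq : IsQClose j j' q) :
    ∑ i, (j i - j' i) = q :=
  (sum_filter_of_ne fun _ _ hi => by omega).symm.trans hq

theorem card_piFinset_ite_zero {ι : Type*} [Fintype ι] [DecidableEq ι] (f : ι → ℕ) (θ : ℕ) :
    #(Fintype.piFinset fun i => if f i = 0 then {0} else range θ) =
      θ ^ #(univ.filter (f · ≠ 0)) := by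
  simp only [Fintype.card_piFinset, apply_ite card, card_singleton, card_range]
  rw [prod_ite, prod_const_one, one_mul, prod_const]

-- `w` is pinned to `0` off the changed coordinates, so that only those are counted.
def exchangeCodes (h θ q : ℕ) : Finset (Σ _ : (Fin h → ℕ) × (Fin h → ℕ), Fin h → ℕ) :=
  (Nat.antidiagonalTuple h (q + 1) ×ˢ Nat.antidiagonalTuple h q).sigma fun ac =>
    Fintype.piFinset fun i => if ac.1 i + ac.2 i = 0 then {0} else range θ

theorem card_exchangeCodes_le (h θ q : ℕ) :
    #(exchangeCodes h θ q) ≤ (q + h).choose (q + 1) * (q + h - 1).choose q * θ ^ (2 * q + 1) := by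
  have fiber : ∀ ac ∈ Nat.antidiagonalTuple h (q + 1) ×ˢ Nat.antidiagonalTuple h q,
      #(Fintype.piFinset fun i => if ac.1 i + ac.2 i = 0 then {0} else range θ) ≤
        θ ^ (2 * q + 1) := by
    rintro ⟨a, c⟩ hac
    simp only [mem_product, Nat.mem_antidiagonalTuple] at hac
    have hsum : ∑ i, (a i + c i) = 2 * q + 1 := by rw [sum_add_distrib, hac.1, hac.2]; ring
    have hsupp : (univ.filter fun i => a i + c i ≠ 0).Nonempty := by
      obtain ⟨i, -, hi⟩ := exists_ne_zero_of_sum_ne_zero (by rw [hsum]; omega)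
      exact ⟨i, mem_filter.mpr ⟨mem_univ i, hi⟩⟩
    rw [card_piFinset_ite_zero (fun i => a i + c i)]
    rcases θ.eq_zero_or_pos with rfl | hθ
    · exact (zero_pow hsupp.card_pos.ne').trans_le (Nat.zero_le _)
    · exact Nat.pow_le_pow_right hθ (hsum ▸ card_filter_ne_zero_le_sum _ _)
  rw [exchangeCodes, card_sigma]
  calc _ ≤ #(Nat.antidiagonalTuple h (q + 1) ×ˢ Nat.antidiagonalTuple h q) • θ ^ (2 * q + 1) :=
        sum_le_card_nsmul _ _ _ fiber
    _ = _ := by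
      rw [smul_eq_mul, card_product, Nat.card_antidiagonalTuple, Nat.card_antidiagonalTuple,
        show h + (q + 1) - 1 = q + h by omega, add_comm h q]

noncomputable def codeValue {h : ℕ} (val : Fin h → ℕ → ℝ)
    (x : Σ _ : (Fin h → ℕ) × (Fin h → ℕ), Fin h → ℕ) : ℝ :=
  ∑ i, (val i (x.2 i + x.1.1 i) - val i (x.2 i + x.1.2 i))

theorem exists_mem_exchangeCodes_codeValue_eq {h s q : ℕ} {n js j' : Fin h → ℕ}
    (val : Fin h → ℕ → ℝ) (hjs : IsFeasible n s js) (hj' : IsFeasible n (s + 1) j')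
    (hq : IsQClose js j' q) :
    ∃ x ∈ exchangeCodes h (univ.sup n) q, codeValue val x = dVal val js j' := by
  refine ⟨⟨(fun i => j' i - js i, fun i => js i - j' i),
    fun i => if js i = j' i then 0 else min (js i) (j' i)⟩, ?_, ?_⟩
  · have hc := hq.sum_tsub_eq
    have ha : ∑ i, (j' i - js i) = q + 1 := by
      have := sum_tsub_add_sum_eq univ js j'
      rw [hjs.2, hj'.2, hc] at this
      omega
    simp only [exchangeCodes, mem_sigma, mem_product, Nat.mem_antidiagonalTuple,
      Fintype.mem_piFinset]
    refine ⟨⟨ha, hc⟩, fun i => ?_⟩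
    have hnθ : n i ≤ univ.sup n := le_sup (mem_univ i)
    have := hjs.1 i
    have := hj'.1 i
    split_ifs <;> simp only [mem_singleton, mem_range] <;> omega
  · rw [dVal_eq_sum, codeValue]
    refine sum_congr rfl fun i _ => ?_
    dsimp only
    split_ifs with hi
    · simp [hi]
    · rw [show min (js i) (j' i) + (j' i - js i) = j' i by omega,
        show min (js i) (j' i) + (js i - j' i) = js i by omega]

theorem finite_and_ncard_le_of_subset_image_biUnion {α β ι : Type*} [DecidableEq β] {D : Set α}
    (f : β → α) (S : Finset ι) (g : ι → Finset β) {b : ι → ℕ} (hb : ∀ q ∈ S, #(g q) ≤ b q)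
    (hD : D ⊆ f '' ↑(S.biUnion g)) :
    D.Finite ∧ D.ncard ≤ ∑ q ∈ S, b q := by
  have hfin : (f '' ↑(S.biUnion g)).Finite := (S.biUnion g).finite_toSet.image f
  refine ⟨hfin.subset hD, ?_⟩
  calc D.ncard ≤ (f '' ↑(S.biUnion g)).ncard := Set.ncard_le_ncard hD hfin
    _ ≤ #(S.biUnion g) := (Set.ncard_image_le (S.biUnion g).finite_toSet).trans_eq
        (Set.ncard_coe_finset _)
    _ ≤ ∑ q ∈ S, #(g q) := card_biUnion_le
    _ ≤ ∑ q ∈ S, b q := sum_le_sum hb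

theorem stmt11_general {h : ℕ} (n : Fin h → ℕ)
    (val : Fin h → ℕ → ℝ) :
    letI θ : ℕ := Finset.univ.sup n
    letI 𝒟 : Set ℝ := {t : ℝ | ∃ s : ℕ, s < ∑ i, n i ∧
      ∃ js : Fin h → ℕ, IsFeasible n s js ∧
        ∃ j' : Fin h → ℕ, Aug n s js j' ∧ t = dVal val js j'}
    𝒟.Finite ∧
      𝒟.ncard ≤ ∑ q ∈ Finset.range ((θ - 1) * θ * (θ + 1) / 2 + 1),
        Nat.choose (q + h) (q + 1) * Nat.choose (q + h - 1) q * θ ^ (2 * q + 1) := by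
  refine finite_and_ncard_le_of_subset_image_biUnion (codeValue val) _ (exchangeCodes h _)
    (fun q _ => card_exchangeCodes_le h _ q) ?_
  rintro t ⟨s, -, js, hjs, j', ⟨hj', q, hq, hclose⟩, rfl⟩
  obtain ⟨x, hx, hval⟩ := exists_mem_exchangeCodes_codeValue_eq val hjs hj' hclose
  exact ⟨x, mem_biUnion.mpr ⟨q, mem_range.mpr (Nat.lt_succ_of_le hq), hx⟩, hval⟩

/-- the set `𝒟` of all values `d(j^s, j^{s+1})`, over all
`s ∈ {0,…,∑ n_i − 1}`, all feasible `j^s` for `val(s)` and all `j^{s+1} ∈ Aug(j^s)`,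
is finite with `|𝒟| ≤ ∑_{q=0}^{θ̄} C(q+h, q+1) C(q+h-1, q) θ^(2q+1)`, where
`θ = max n_i` and `θ̄ = (θ-1)θ(θ+1)/2`. -/
theorem stmt11 {h : ℕ} (hh : 0 < h) (n : Fin h → ℕ) (hn : ∀ i, 0 < n i)
    (val : Fin h → ℕ → ℝ) :
    letI θ : ℕ := Finset.univ.sup n
    letI 𝒟 : Set ℝ := {t : ℝ | ∃ s : ℕ, s < ∑ i, n i ∧
      ∃ js : Fin h → ℕ, IsFeasible n s js ∧
        ∃ j' : Fin h → ℕ, Aug n s js j' ∧ t = dVal val js j'}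
    𝒟.Finite ∧
      𝒟.ncard ≤ ∑ q ∈ Finset.range ((θ - 1) * θ * (θ + 1) / 2 + 1),
        Nat.choose (q + h) (q + 1) * Nat.choose (q + h - 1) q * θ ^ (2 * q + 1) :=
  stmt11_general n val
end

section
/- Let A ∈ ℝ^{m×n}, C ∈ ℝ^{m×k}, b ∈ ℝ^m, and σ ∈ ℕ. Then the infimum of ‖Ax + Cλ − b‖ over all x ∈ ℝ^n and λ ∈ ℝ^k with |supp(x)| ≤ σ is attained: there exist x* ∈ ℝ^n with |supp(x*)| ≤ σ and λ* ∈ ℝ^k achieving this infimum. -/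
/-!
The vectors with at most `σ` nonzero entries form the finite union, over the supports `s` with
`|s| ≤ σ`, of the coordinate subspaces of vectors vanishing off `s`. Hence the achievable vectors
`A x + C λ` form a finite union of subspaces, a closed set, and a closed nonempty set in a
finite-dimensional space contains a point nearest to `b`.
-/

open Set Metric
open scoped Pointwise

variable {ι R : Type*}

def sparseVectors (R ι : Type*) [Zero R] (σ : ℕ) : Set (ι → R) :=
  {x | {i | x i ≠ 0}.ncard ≤ σ}

theorem zero_mem_sparseVectors [Zero R] (σ : ℕ) : (0 : ι → R) ∈ sparseVectors R ι σ := by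
  simp [sparseVectors]

theorem sparseVectors_eq_iUnion [Finite ι] [Semiring R] (σ : ℕ) :
    sparseVectors R ι σ =
      ⋃ s : {s : Set ι // s.ncard ≤ σ},
        ((Submodule.pi s.1ᶜ fun _ => ⊥ : Submodule R (ι → R)) : Set (ι → R)) := by
  ext x
  simp only [sparseVectors, mem_ofPred_eq, mem_iUnion, SetLike.mem_coe, Submodule.mem_pi,
    mem_compl_iff, Submodule.mem_bot, Subtype.exists, exists_prop]
  constructor
  · intro hx
    exact ⟨{i | x i ≠ 0}, hx, fun i hi => by simpa using hi⟩
  · rintro ⟨s, hs, hx⟩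
    refine le_trans (ncard_le_ncard fun i hi => ?_) hs
    by_contra his
    exact hi (hx i his)

variable {E : Type*} [NormedAddCommGroup E] [NormedSpace ℝ E] [FiniteDimensional ℝ E]

theorem isClosed_image_sparseVectors_add [Finite ι] (L : (ι → ℝ) →ₗ[ℝ] E) (W : Submodule ℝ E)
    (σ : ℕ) : IsClosed (L '' sparseVectors ℝ ι σ + (W : Set E)) := by
  rw [sparseVectors_eq_iUnion, image_iUnion, iUnion_add]
  refine isClosed_iUnion_of_finite fun s => ?_
  rw [← Submodule.map_coe, ← Submodule.coe_sup]
  exact Submodule.closed_of_finiteDimensional _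

theorem exists_sparseVectors_add_mem_dist_le [Finite ι] (L : (ι → ℝ) →ₗ[ℝ] E)
    (W : Submodule ℝ E) (σ : ℕ) (b : E) :
    ∃ x ∈ sparseVectors ℝ ι σ, ∃ w ∈ W, ∀ x' ∈ sparseVectors ℝ ι σ, ∀ w' ∈ W,
      dist (L x + w) b ≤ dist (L x' + w') b := by
  have hne : (L '' sparseVectors ℝ ι σ + (W : Set E)).Nonempty :=
    ⟨L 0 + 0, add_mem_add (mem_image_of_mem L (zero_mem_sparseVectors σ)) W.zero_mem⟩
  obtain ⟨_, ⟨_, ⟨x, hx, rfl⟩, w, hw, rfl⟩, hnearest⟩ :=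
    (isClosed_image_sparseVectors_add L W σ).exists_infDist_eq_dist hne b
  refine ⟨x, hx, w, hw, fun x' hx' w' hw' => ?_⟩
  rw [dist_comm, ← hnearest, dist_comm]
  exact infDist_le_dist_of_mem (add_mem_add (mem_image_of_mem L hx') hw')

theorem EuclideanSpace.dist_toLp_eq_sqrt_sum {m : Type*} [Fintype m] (z b : m → ℝ) :
    dist (WithLp.toLp 2 z) (WithLp.toLp 2 b) = Real.sqrt (∑ r, (z r - b r) ^ 2) := by
  simp [EuclideanSpace.dist_eq, Real.dist_eq, sq_abs]

/-- The infimum of `‖Ax + Cλ - b‖` over `x ∈ ℝ^n`, `λ ∈ ℝ^k`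
with `|supp(x)| ≤ σ` is attained. -/
theorem stmt14 {m n k : ℕ} (A : Matrix (Fin m) (Fin n) ℝ)
    (C : Matrix (Fin m) (Fin k) ℝ) (b : Fin m → ℝ) (σ : ℕ) :
    ∃ (x : Fin n → ℝ) (lam : Fin k → ℝ),
      Set.ncard {i | x i ≠ 0} ≤ σ ∧
      ∀ (x' : Fin n → ℝ) (lam' : Fin k → ℝ), Set.ncard {i | x' i ≠ 0} ≤ σ →
        Real.sqrt (∑ r, (A.mulVec x r + C.mulVec lam r - b r) ^ 2) ≤
          Real.sqrt (∑ r, (A.mulVec x' r + C.mulVec lam' r - b r) ^ 2) := by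
  set toEuclidean := (WithLp.linearEquiv 2 ℝ (Fin m → ℝ)).symm.toLinearMap
  obtain ⟨x, hx, _, ⟨lam, rfl⟩, hmin⟩ :=
    exists_sparseVectors_add_mem_dist_le (toEuclidean ∘ₗ A.mulVecLin)
      (LinearMap.range (toEuclidean ∘ₗ C.mulVecLin)) σ (WithLp.toLp 2 b)
  refine ⟨x, lam, hx, fun x' lam' hx' => ?_⟩
  have hle := hmin x' hx' _ (LinearMap.mem_range_self _ lam')
  simp only [LinearMap.comp_apply, Matrix.mulVecLin_apply, ← map_add] at hle
  simpa only [toEuclidean, LinearEquiv.coe_coe, WithLp.coe_symm_linearEquiv,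
    EuclideanSpace.dist_toLp_eq_sqrt_sum, Pi.add_apply] using hle
end

section
/- Let n, k, σ be natural numbers with σ ≤ n, let A be an n×n real diagonal matrix, and let b, c_1,…,c_k ∈ ℝ^n. Then there exists a constant C₀ depending only on k (and not on n or the data) and a family 𝒳 of at most C₀·n^{2k} subsets of {1,…,n}, each of cardinality σ, such that for every λ ∈ ℝ^k the problem opt(σ)_{|λ} := min{‖Ax − (b − Σ_{ℓ=1}^k c_ℓ λ_ℓ)‖² : x ∈ ℝ^n, |supp(x)| ≤ σ} has an optimal solution whose support is contained in some χ ∈ 𝒳. -/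
/-!
For fixed `λ` the problem separates over the coordinates. Writing `d = b - ∑ c_ℓ λ_ℓ`, an optimal
`x` sets `x_i = d_i / a_i` on `σ` indices with `a_i ≠ 0` and `d_i²` as large as possible, and `0`
elsewhere. With a fixed tie-break this support depends only on the order of the `d_i²`, hence only
on the signs of the `2n²` affine functions `d_i ± d_j` of `λ`.

`N` affine functions on a `k`-dimensional space realize at most `(2N + 1)^k` sign patterns: by
induction on `N`, a new function `g` extends each old pattern in at most one way, except for the
patterns realized on the zero set of `g`, a space of one dimension less, which extend in at most
three ways. So there are at most `(4n² + 1)^k ≤ 5^k n^(2k)` supports; each is padded to size `σ`.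
-/

/-- The objective of `opt(σ)_{|λ}` for a diagonal matrix with diagonal `a`:
`‖Ax − (b − ∑_ℓ c_ℓ λ_ℓ)‖²`. -/
noncomputable def objDiag {n k : ℕ} (a b : Fin n → ℝ) (c : Fin k → Fin n → ℝ)
    (x : Fin n → ℝ) (lam : Fin k → ℝ) : ℝ :=
  ∑ i, (a i * x i - (b i - ∑ ℓ, c ℓ i * lam ℓ)) ^ 2

open Finset Module

section SignPatterns

variable {V : Type*} [AddCommGroup V] [Module ℝ V] {ι : Type*}

noncomputable def signPattern (f : ι → V →ᵃ[ℝ] ℝ) (v : V) : ι → SignType :=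
  fun m => SignType.sign (f m v)

lemma sign_lineMap_of_sign_eq {a b t : ℝ} (h : SignType.sign a = SignType.sign b)
    (ht₀ : 0 ≤ t) (ht₁ : t ≤ 1) :
    SignType.sign (AffineMap.lineMap a b t) = SignType.sign a := by
  have ht : t ∈ Set.Icc 0 1 := ⟨ht₀, ht₁⟩
  rcases lt_trichotomy a 0 with ha | rfl | ha
  · have hb : b < 0 := by rwa [← sign_eq_neg_one_iff, ← h, sign_eq_neg_one_iff]
    rw [sign_neg ha, sign_neg ((convex_Iio 0).lineMap_mem ha hb ht)]
  · have hb : b = 0 := by rw [← sign_eq_zero_iff, ← h, sign_zero]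
    simp [hb]
  · have hb : 0 < b := by rwa [← sign_eq_one_iff, ← h, sign_eq_one_iff]
    rw [sign_pos ha, sign_pos ((convex_Ioi 0).lineMap_mem ha hb ht)]

lemma exists_signPattern_eq_of_pos_of_neg (f : ι → V →ᵃ[ℝ] ℝ) (g : V →ᵃ[ℝ] ℝ) {u v : V}
    (hu : 0 < g u) (hv : g v < 0) (h : signPattern f u = signPattern f v) :
    ∃ w, g w = 0 ∧ signPattern f w = signPattern f u := by
  set t := g u / (g u - g v)
  have ht₀ : 0 ≤ t := div_nonneg hu.le (by linarith)
  have ht₁ : t ≤ 1 := (div_le_one (by linarith)).2 (by linarith)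
  refine ⟨AffineMap.lineMap u v t, ?_, funext fun m => ?_⟩
  · have : t * (g u - g v) = g u := div_mul_cancel₀ _ (by linarith)
    rw [AffineMap.apply_lineMap, AffineMap.lineMap_apply_ring']
    linarith
  · simp only [signPattern, AffineMap.apply_lineMap]
    exact sign_lineMap_of_sign_eq (congrFun h m) ht₀ ht₁

lemma pow_succ_add_two_mul_pow_le (m e : ℕ) : m ^ (e + 1) + 2 * m ^ e ≤ (m + 2) ^ (e + 1) :=
  calc m ^ (e + 1) + 2 * m ^ e = (m + 2) * m ^ e := by ring
    _ ≤ (m + 2) * (m + 2) ^ e := by gcongr; omega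
    _ = (m + 2) ^ (e + 1) := by ring

lemma ncard_range_signPattern_le_of_linear_eq_zero {N : ℕ} (f : Fin (N + 1) → V →ᵃ[ℝ] ℝ)
    (hg : (f (Fin.last N)).linear = 0) :
    (Set.range (signPattern f)).ncard ≤ (Set.range (signPattern (Fin.init f))).ncard := by
  obtain ⟨c, hc⟩ := (f (Fin.last N)).linear_eq_zero_iff_exists_const.1 hg
  have hinj : Set.InjOn Fin.init (Set.range (signPattern f)) := by
    rintro _ ⟨u, rfl⟩ _ ⟨v, rfl⟩ huv
    rw [← Fin.snoc_init_self (signPattern f u), ← Fin.snoc_init_self (signPattern f v), huv]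
    simp [signPattern, hc]
  rw [← hinj.ncard_image, ← Set.range_comp]
  rfl

/-- Only a pattern realized on the zero set of the new function `g` can have several extensions:
the segment between points of opposite sign of `g` crosses that zero set. -/
lemma ncard_range_signPattern_succ_le {N : ℕ} (f : Fin (N + 1) → V →ᵃ[ℝ] ℝ) :
    (Set.range (signPattern f)).ncard ≤ (Set.range (signPattern (Fin.init f))).ncard +
      2 * (signPattern (Fin.init f) '' {v | f (Fin.last N) v = 0}).ncard := by
  set P := Set.range (signPattern (Fin.init f))
  set Q := signPattern (Fin.init f) '' {v | f (Fin.last N) v = 0}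
  let S (τ : SignType) := {s ∈ Set.range (signPattern f) | s (Fin.last N) = τ}
  have hinj (τ : SignType) : Set.InjOn Fin.init (S τ) := by
    intro s hs s' hs' hss'
    rw [← Fin.snoc_init_self s, ← Fin.snoc_init_self s', hss', hs.2, hs'.2]
  have hP (τ : SignType) : Fin.init '' S τ ⊆ P := by
    rintro _ ⟨_, ⟨⟨v, rfl⟩, -⟩, rfl⟩
    exact ⟨v, rfl⟩
  have hQ₀ : Fin.init '' S 0 ⊆ Q := by
    rintro _ ⟨_, ⟨⟨v, rfl⟩, hv⟩, rfl⟩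
    exact ⟨v, sign_eq_zero_iff.1 hv, rfl⟩
  have hQ₁ : Fin.init '' S 1 ∩ Fin.init '' S (-1) ⊆ Q := by
    rintro _ ⟨⟨_, ⟨⟨u, rfl⟩, hu⟩, rfl⟩, ⟨_, ⟨⟨v, rfl⟩, hv⟩, huv⟩⟩
    obtain ⟨w, hw, hwu⟩ := exists_signPattern_eq_of_pos_of_neg (Fin.init f) (f (Fin.last N))
      (sign_eq_one_iff.1 hu) (sign_eq_neg_one_iff.1 hv) huv.symm
    exact ⟨w, hw, hwu⟩
  have hcover : Set.range (signPattern f) ⊆ S 1 ∪ S (-1) ∪ S 0 := by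
    intro s hs
    rcases h : s (Fin.last N) with _ | _ | _
    · exact Or.inr ⟨hs, h⟩
    · exact Or.inl (Or.inr ⟨hs, h⟩)
    · exact Or.inl (Or.inl ⟨hs, h⟩)
  have h₁ := Set.ncard_le_ncard hcover
  have h₂ := Set.ncard_union_le (S 1 ∪ S (-1)) (S 0)
  have h₂' := Set.ncard_union_le (S 1) (S (-1))
  have h₃ := Set.ncard_union_add_ncard_inter (Fin.init '' S 1) (Fin.init '' S (-1))
  have h₄ := Set.ncard_le_ncard (Set.union_subset (hP 1) (hP (-1)))
  have h₅ := Set.ncard_le_ncard hQ₁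
  have h₆ := Set.ncard_le_ncard hQ₀
  rw [(hinj 1).ncard_image, (hinj (-1)).ncard_image] at h₃
  rw [(hinj 0).ncard_image] at h₆
  omega

/-- The zero set of `g` is the translate `p₀ + ker g.linear`. -/
lemma ncard_image_signPattern_zeroSet_le {N : ℕ} (f : Fin N → V →ᵃ[ℝ] ℝ) (g : V →ᵃ[ℝ] ℝ)
    {p₀ : V} (hp₀ : g p₀ = 0) :
    (signPattern f '' {v | g v = 0}).ncard ≤
      (Set.range (signPattern fun m => (f m).comp
        ((AffineEquiv.vaddConst ℝ p₀).toAffineMap.comp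
          (LinearMap.ker g.linear).subtype.toAffineMap))).ncard := by
  refine Set.ncard_le_ncard ?_ (Set.toFinite _)
  rintro _ ⟨v, hv : g v = 0, rfl⟩
  have hker : v - p₀ ∈ LinearMap.ker g.linear := by
    rw [LinearMap.mem_ker, ← vsub_eq_sub, AffineMap.linearMap_vsub, hv, hp₀, vsub_self]
  exact ⟨⟨v - p₀, hker⟩, funext fun m => by simp [signPattern]⟩

theorem ncard_range_signPattern_le [FiniteDimensional ℝ V] {N : ℕ} (f : Fin N → V →ᵃ[ℝ] ℝ) :
    (Set.range (signPattern f)).ncard ≤ (2 * N + 1) ^ finrank ℝ V := by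
  induction N generalizing V with
  | zero => simpa using Set.ncard_le_one_of_subsingleton (Set.range (signPattern f))
  | succ N ih =>
    set g := f (Fin.last N)
    by_cases hg : g.linear = 0
    · calc (Set.range (signPattern f)).ncard
          ≤ (Set.range (signPattern (Fin.init f))).ncard :=
            ncard_range_signPattern_le_of_linear_eq_zero f hg
        _ ≤ (2 * N + 1) ^ finrank ℝ V := ih _
        _ ≤ (2 * (N + 1) + 1) ^ finrank ℝ V := by gcongr; omega
    · have hrank := Module.Dual.finrank_ker_add_one_of_ne_zero hg
      obtain ⟨p₀, hp₀⟩ : ∃ p₀, g p₀ = 0 := by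
        obtain ⟨w, hw⟩ := LinearMap.surjective hg (-g 0)
        exact ⟨w, by rw [AffineMap.decomp]; simp [hw]⟩
      have hQ := (ncard_image_signPattern_zeroSet_le (Fin.init f) g hp₀).trans (ih _)
      have hP := ih (Fin.init f)
      have := ncard_range_signPattern_succ_le f
      rw [← hrank] at hP ⊢
      rw [show 2 * (N + 1) + 1 = 2 * N + 1 + 2 by ring]
      linarith [pow_succ_add_two_mul_pow_le (2 * N + 1) (finrank ℝ (LinearMap.ker g.linear))]

theorem ncard_range_signPattern_le_card [Fintype ι] [FiniteDimensional ℝ V]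
    (f : ι → V →ᵃ[ℝ] ℝ) :
    (Set.range (signPattern f)).ncard ≤ (2 * Fintype.card ι + 1) ^ finrank ℝ V := by
  set e := Fintype.equivFin ι
  have hrange : Set.range (signPattern f) =
      (· ∘ e) '' Set.range (signPattern (f ∘ e.symm)) := by
    rw [← Set.range_comp]
    exact congrArg Set.range (funext fun v => funext fun i => by simp [signPattern])
  rw [hrange]
  exact Set.ncard_image_le (Set.toFinite _) |>.trans (ncard_range_signPattern_le _)

end SignPatterns

section LowestKeys

variable {α β : Type*} [LinearOrder β] (κ : α → β) (Z : Finset α)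

def keyRank (i : α) : ℕ := #{j ∈ Z | κ j < κ i}

def lowestKeys (σ : ℕ) : Finset α := {i ∈ Z | keyRank κ Z i < σ}

variable {κ Z}

lemma keyRank_lt_keyRank {i j : α} (hi : i ∈ Z) (h : κ i < κ j) :
    keyRank κ Z i < keyRank κ Z j := by
  refine card_lt_card ⟨fun l hl => ?_, fun hsub => ?_⟩
  · simp only [mem_filter] at hl ⊢
    exact ⟨hl.1, hl.2.trans h⟩
  · simpa using (mem_filter.1 (hsub (mem_filter.2 ⟨hi, h⟩))).2

lemma keyRank_lt_card {i : α} (hi : i ∈ Z) : keyRank κ Z i < #Z :=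
  card_lt_card (filter_ssubset.2 ⟨i, hi, lt_irrefl _⟩)

lemma card_lowestKeys (hκ : Function.Injective κ) (σ : ℕ) :
    #(lowestKeys κ Z σ) = min σ #Z := by
  have hinj : Set.InjOn (keyRank κ Z) Z := by
    intro i hi j hj hij
    by_contra hne
    rcases (hκ.ne hne).lt_or_gt with h | h
    · exact (keyRank_lt_keyRank hi h).ne hij
    · exact (keyRank_lt_keyRank hj h).ne hij.symm
  have himage : Z.image (keyRank κ Z) = range #Z :=
    eq_of_subset_of_card_le (image_subset_iff.2 fun i hi => mem_range.2 (keyRank_lt_card hi))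
      (by rw [card_range, card_image_of_injOn hinj])
  have hfilter : (range #Z).filter (· < σ) = range (min σ #Z) := by
    ext m
    simp only [mem_filter, mem_range, lt_min_iff, and_comm]
  rw [lowestKeys, ← card_image_of_injOn (hinj.mono (filter_subset _ _)),
    ← filter_image (p := (· < σ)), himage, hfilter, card_range]

lemma lt_of_mem_lowestKeys (hκ : Function.Injective κ) {σ : ℕ} {i j : α}
    (hj : j ∈ lowestKeys κ Z σ) (hi : i ∈ Z) (hi' : i ∉ lowestKeys κ Z σ) : κ j < κ i := by
  refine lt_of_le_of_ne (not_lt.1 fun h => hi' ?_) (hκ.ne fun h => hi' (h ▸ hj))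
  exact mem_filter.2 ⟨hi, (keyRank_lt_keyRank hi h).trans (mem_filter.1 hj).2⟩

lemma lowestKeys_congr {κ' : α → β} (h : ∀ i j, κ i < κ j ↔ κ' i < κ' j) (σ : ℕ) :
    lowestKeys κ Z σ = lowestKeys κ' Z σ := by
  unfold lowestKeys keyRank
  congr! 4 with i - j -
  exact h j i

end LowestKeys

lemma sum_le_sum_of_card_le_of_forall_sdiff_le {α M : Type*} [DecidableEq α] [AddCommMonoid M]
    [LinearOrder M] [IsOrderedAddMonoid M] {S T : Finset α} {f : α → M}
    (hf : ∀ j ∈ T, 0 ≤ f j) (hcard : #S ≤ #T) (h : ∀ i ∈ S \ T, ∀ j ∈ T \ S, f i ≤ f j) :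
    ∑ i ∈ S, f i ≤ ∑ i ∈ T, f i := by
  have hsdiff : ∑ i ∈ S \ T, f i ≤ ∑ i ∈ T \ S, f i := by
    rcases (T \ S).eq_empty_or_nonempty with hTS | hTS
    · have hST : S \ T = ∅ := by
        simpa [hTS] using card_sdiff_le_card_sdiff_iff.2 hcard
      rw [hST, hTS]
    · obtain ⟨j₀, hj₀, hmin⟩ := exists_min_image (T \ S) f hTS
      calc ∑ i ∈ S \ T, f i ≤ #(S \ T) • f j₀ := sum_le_card_nsmul _ _ _ fun i hi => h i hi j₀ hj₀
        _ ≤ #(T \ S) • f j₀ :=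
          nsmul_le_nsmul_left (hf j₀ (mem_sdiff.1 hj₀).1) (card_sdiff_le_card_sdiff_iff.2 hcard)
        _ ≤ ∑ i ∈ T \ S, f i := card_nsmul_le_sum _ _ _ hmin
  rw [← sum_inter_add_sum_sdiff S T, ← sum_inter_add_sum_sdiff T S, inter_comm]
  gcongr

section TopWeights

variable {α M : Type*}

def weightKey (w : α → M) (i : α) : Mᵒᵈ ×ₗ α := toLex (OrderDual.toDual (w i), i)

lemma weightKey_injective (w : α → M) : Function.Injective (weightKey w) :=
  fun _ _ h => congrArg (fun p => (ofLex p).2) h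

variable [LinearOrder α] [LinearOrder M]

/-- The `σ` heaviest indices of `Z` under `w`. Ties go to the smaller index, so that the choice
depends only on the order of the weights. -/
def topWeights (w : α → M) (Z : Finset α) (σ : ℕ) : Finset α :=
  lowestKeys (weightKey w) Z σ

variable {w : α → M} {Z : Finset α} {σ : ℕ}

lemma topWeights_subset : topWeights w Z σ ⊆ Z := filter_subset _ _

lemma card_topWeights : #(topWeights w Z σ) = min σ #Z :=
  card_lowestKeys (weightKey_injective w) σ

lemma le_of_mem_topWeights {i j : α} (hj : j ∈ topWeights w Z σ) (hi : i ∈ Z)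
    (hi' : i ∉ topWeights w Z σ) : w i ≤ w j := by
  have := lt_of_mem_lowestKeys (weightKey_injective w) hj hi hi'
  rcases Prod.Lex.toLex_lt_toLex.1 this with h | ⟨h, -⟩
  · exact (OrderDual.toDual_lt_toDual.1 h).le
  · exact (OrderDual.toDual_inj.1 h).ge

lemma topWeights_congr {w' : α → M} (h : ∀ i j, w i < w j ↔ w' i < w' j) :
    topWeights w Z σ = topWeights w' Z σ := by
  have heq (i j : α) : w i = w j ↔ w' i = w' j := by
    simp only [le_antisymm_iff, ← not_lt, h]
  refine lowestKeys_congr (fun i j => ?_) σ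
  simp only [weightKey, Prod.Lex.toLex_lt_toLex, OrderDual.toDual_lt_toDual,
    OrderDual.toDual_inj, h, heq]

lemma sum_le_sum_topWeights [AddCommMonoid M] [IsOrderedAddMonoid M] {S : Finset α}
    (hw : ∀ i ∈ Z, 0 ≤ w i) (hS : S ⊆ Z) (hσ : #S ≤ σ) :
    ∑ i ∈ S, w i ≤ ∑ i ∈ topWeights w Z σ, w i := by
  refine sum_le_sum_of_card_le_of_forall_sdiff_le (fun j hj => hw j (topWeights_subset hj))
    (by rw [card_topWeights]; exact le_min hσ (card_le_card hS)) fun i hi j hj => ?_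
  rw [mem_sdiff] at hi hj
  exact le_of_mem_topWeights hj.1 (hS hi.1) hi.2

end TopWeights

section SparseDiagonal

variable {ι : Type*} [Fintype ι] (a d : ι → ℝ)

lemma sum_sq_sub_sum_sq_le (y : ι → ℝ) :
    ∑ i, d i ^ 2 - ∑ i with a i ≠ 0 ∧ y i ≠ 0, d i ^ 2 ≤ ∑ i, (a i * y i - d i) ^ 2 := by
  rw [sum_filter, ← sum_sub_distrib]
  refine sum_le_sum fun i _ => ?_
  split_ifs with h
  · simp only [sub_self]; positivity
  · have : a i * y i = 0 := by
      rcases not_and_or.1 h with h | h <;> simp_all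
    simp [this]

variable [LinearOrder ι] (σ : ℕ)

noncomputable def sparseSupport : Finset ι := topWeights (fun i => d i ^ 2) {i | a i ≠ 0} σ

noncomputable def sparseSolution (i : ι) : ℝ :=
  if i ∈ sparseSupport a d σ then d i / a i else 0

lemma support_sparseSolution_subset :
    {i | sparseSolution a d σ i ≠ 0} ⊆ sparseSupport a d σ :=
  fun _ hi => by_contra fun h => hi (if_neg h)

lemma card_sparseSupport_le : #(sparseSupport a d σ) ≤ σ :=
  card_topWeights.trans_le (min_le_left _ _)

lemma ncard_support_sparseSolution_le : {i | sparseSolution a d σ i ≠ 0}.ncard ≤ σ :=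
  (Set.ncard_le_ncard (support_sparseSolution_subset a d σ)).trans
    ((Set.ncard_coe_finset _).trans_le (card_sparseSupport_le a d σ))

lemma sum_sq_sparseSolution :
    ∑ i, (a i * sparseSolution a d σ i - d i) ^ 2 =
      ∑ i, d i ^ 2 - ∑ i ∈ sparseSupport a d σ, d i ^ 2 := by
  rw [← univ_inter (sparseSupport a d σ), ← sum_ite_mem, ← sum_sub_distrib]
  refine sum_congr rfl fun i _ => ?_
  by_cases hi : i ∈ sparseSupport a d σ
  · have ha : a i ≠ 0 := (mem_filter.1 (topWeights_subset hi)).2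
    simp [sparseSolution, hi, mul_div_cancel₀ _ ha]
  · simp [sparseSolution, hi]

lemma sum_sq_sparseSolution_le {y : ι → ℝ} (hy : {i | y i ≠ 0}.ncard ≤ σ) :
    ∑ i, (a i * sparseSolution a d σ i - d i) ^ 2 ≤ ∑ i, (a i * y i - d i) ^ 2 := by
  have hS : #{i | a i ≠ 0 ∧ y i ≠ 0} ≤ σ := by
    refine le_trans ?_ hy
    rw [← Set.ncard_coe_finset]
    exact Set.ncard_le_ncard (fun i hi => (mem_filter.1 hi).2.2) (Set.toFinite _)
  have hsum : ∑ i with a i ≠ 0 ∧ y i ≠ 0, d i ^ 2 ≤ ∑ i ∈ sparseSupport a d σ, d i ^ 2 :=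
    sum_le_sum_topWeights (fun i _ => sq_nonneg (d i))
      (fun i hi => mem_filter.2 ⟨mem_univ i, (mem_filter.1 hi).2.1⟩) hS
  rw [sum_sq_sparseSolution]
  linarith [sum_sq_sub_sum_sq_le a d y]

end SparseDiagonal

lemma Set.ncard_range_le_of_factorsThrough {α β γ : Type*} {f : α → β} {g : α → γ}
    (h : g.FactorsThrough f) (hf : (Set.range f).Finite) :
    (Set.range g).ncard ≤ (Set.range f).ncard := by
  rcases isEmpty_or_nonempty α with hα | ⟨⟨a₀⟩⟩
  · simp [Set.range_eq_empty]
  · have : Set.range g = Function.extend f g (fun _ => g a₀) '' Set.range f := by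
      rw [← Set.range_comp]
      exact congrArg Set.range (funext fun a => (h.extend_apply _ a).symm)
    rw [this]
    exact Set.ncard_image_le hf

section Residuals

variable {ι V : Type*} [AddCommGroup V] [Module ℝ V]

noncomputable def residualMap {k : ℕ} (b : ι → ℝ) (c : Fin k → ι → ℝ) (i : ι) :
    (Fin k → ℝ) →ᵃ[ℝ] ℝ :=
  AffineMap.const ℝ _ (b i) - (∑ ℓ, c ℓ i • LinearMap.proj ℓ).toAffineMap

lemma residualMap_apply {k : ℕ} (b : ι → ℝ) (c : Fin k → ι → ℝ) (i : ι) (lam : Fin k → ℝ) :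
    residualMap b c i lam = b i - ∑ ℓ, c ℓ i * lam ℓ := by
  simp [residualMap]

lemma objDiag_eq {n k : ℕ} (a b : Fin n → ℝ) (c : Fin k → Fin n → ℝ) (x : Fin n → ℝ)
    (lam : Fin k → ℝ) : objDiag a b c x lam = ∑ i, (a i * x i - residualMap b c i lam) ^ 2 := by
  simp [objDiag, residualMap_apply]

def sumsAndDiffs (r : ι → V →ᵃ[ℝ] ℝ) : ι × ι ⊕ ι × ι → V →ᵃ[ℝ] ℝ :=
  Sum.elim (fun p => r p.1 - r p.2) (fun p => r p.1 + r p.2)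

/-- `x² < y²` is decided by the signs of `y - x` and `y + x`. -/
lemma sq_lt_sq_iff_of_signPattern_eq {r : ι → V →ᵃ[ℝ] ℝ} {u v : V}
    (h : signPattern (sumsAndDiffs r) u = signPattern (sumsAndDiffs r) v) (i j : ι) :
    r i u ^ 2 < r j u ^ 2 ↔ r i v ^ 2 < r j v ^ 2 := by
  have key (x y : ℝ) : x ^ 2 < y ^ 2 ↔ SignType.sign (y - x) * SignType.sign (y + x) = 1 := by
    rw [← sign_mul, sign_eq_one_iff, show (y - x) * (y + x) = y ^ 2 - x ^ 2 by ring, sub_pos]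
  have hdiff := congrFun h (.inl (j, i))
  have hsum := congrFun h (.inr (j, i))
  simp only [signPattern, sumsAndDiffs, Sum.elim_inl, Sum.elim_inr, AffineMap.coe_sub,
    AffineMap.coe_add, Pi.sub_apply, Pi.add_apply] at hdiff hsum
  rw [key, key, hdiff, hsum]

end Residuals

/-- for a diagonal `n×n` matrix `A` and `b, c_1,…,c_k ∈ ℝ^n`, `σ ≤ n`,
there is a constant `C₀` depending only on `k` and a family `𝒳` of at most
`C₀ · n^{2k}` subsets of `{1,…,n}`, each of cardinality `σ`, such that for every
`λ ∈ ℝ^k` the problem `opt(σ)_{|λ}` has an optimal solution whose support is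
contained in some `χ ∈ 𝒳`. -/
theorem stmt15 (k : ℕ) :
    ∃ C₀ : ℝ, ∀ (n : ℕ), 0 < n → ∀ (σ : ℕ), σ ≤ n →
      ∀ (a b : Fin n → ℝ) (c : Fin k → Fin n → ℝ),
      ∃ 𝒳 : Finset (Finset (Fin n)),
        (𝒳.card : ℝ) ≤ C₀ * (n : ℝ) ^ (2 * k) ∧
        (∀ χ ∈ 𝒳, χ.card = σ) ∧
        ∀ lam : Fin k → ℝ, ∃ x : Fin n → ℝ,
          Set.ncard {i | x i ≠ 0} ≤ σ ∧
          (∀ y : Fin n → ℝ, Set.ncard {i | y i ≠ 0} ≤ σ →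
            objDiag a b c x lam ≤ objDiag a b c y lam) ∧
          ∃ χ ∈ 𝒳, {i | x i ≠ 0} ⊆ ↑χ := by
  classical
  refine ⟨5 ^ k, fun n hn σ hσ a b c => ?_⟩
  set r := residualMap b c
  set d := fun (lam : Fin k → ℝ) i => r i lam
  choose pad hpad_sub hpad_card using fun χ : {χ : Finset (Fin n) // #χ ≤ σ} =>
    exists_superset_card_eq χ.2 (by simpa using hσ)
  let 𝒳 (lam : Fin k → ℝ) := pad ⟨sparseSupport a (d lam) σ, card_sparseSupport_le _ _ _⟩
  have h𝒳 : 𝒳.FactorsThrough (signPattern (sumsAndDiffs r)) := fun u v h =>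
    congrArg pad (Subtype.ext (topWeights_congr (sq_lt_sq_iff_of_signPattern_eq h)))
  have hcard : (Set.range 𝒳).ncard ≤ 5 ^ k * n ^ (2 * k) :=
    calc (Set.range 𝒳).ncard ≤ (Set.range (signPattern (sumsAndDiffs r))).ncard :=
          Set.ncard_range_le_of_factorsThrough h𝒳 (Set.toFinite _)
      _ ≤ (2 * (n * n + n * n) + 1) ^ k := by
          simpa using ncard_range_signPattern_le_card (sumsAndDiffs r)
      _ ≤ (5 * n ^ 2) ^ k := Nat.pow_le_pow_left (by nlinarith) k
      _ = 5 ^ k * n ^ (2 * k) := by rw [mul_pow, pow_mul]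
  refine ⟨(Set.range 𝒳).toFinset, ?_, ?_, fun lam => ⟨sparseSolution a (d lam) σ,
    ncard_support_sparseSolution_le _ _ _, fun y hy => ?_, 𝒳 lam, by simp, ?_⟩⟩
  · rw [← Set.ncard_eq_toFinset_card']
    exact_mod_cast hcard
  · simp only [Set.mem_toFinset, Set.mem_range, forall_exists_index, forall_apply_eq_imp_iff]
    exact fun _ => hpad_card _
  · rw [objDiag_eq, objDiag_eq]
    exact sum_sq_sparseSolution_le _ _ _ hy
  · exact (support_sparseSolution_subset _ _ _).trans
      (coe_subset.2 (hpad_sub ⟨_, card_sparseSupport_le _ _ _⟩))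
end

section
/- Let A ∈ ℝ^{m×n}, b, c_1,…,c_k ∈ ℝ^m, σ ∈ ℕ, and let 𝒳 be a family of subsets of {1,…,n} such that for every λ ∈ ℝ^k the problem opt(σ)_{|λ} := min{‖Ax − (b − Σ_{ℓ=1}^k c_ℓ λ_ℓ)‖² : x ∈ ℝ^n, |supp(x)| ≤ σ} has an optimal solution whose support is contained in some χ ∈ 𝒳. If (x*, λ*) is an optimal solution of min{‖Ax − (b − Σ_{ℓ=1}^k c_ℓ λ_ℓ)‖² : x ∈ ℝ^n, λ ∈ ℝ^k, |supp(x)| ≤ σ}, then there exists x̃ ∈ ℝ^n with supp(x̃) ⊆ χ for some χ ∈ 𝒳 such that (x̃, λ*) is also an optimal solution of this problem. -/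
/-- The objective `‖Ax − (b − ∑_ℓ c_ℓ λ_ℓ)‖²`. -/
noncomputable def objFn {m n k : ℕ} (A : Matrix (Fin m) (Fin n) ℝ)
    (b : Fin m → ℝ) (c : Fin k → Fin m → ℝ) (x : Fin n → ℝ) (lam : Fin k → ℝ) : ℝ :=
  ∑ r, (A.mulVec x r - (b r - ∑ ℓ, c ℓ r * lam ℓ)) ^ 2

/-- suppose `𝒳` is a family of subsets of `{1,…,n}` such that for every
`λ ∈ ℝ^k` the problem `opt(σ)_{|λ}` has an optimal solution with support contained in
some `χ ∈ 𝒳`. If `(x*, λ*)` is optimal for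
`min{‖Ax − (b − ∑ c_ℓ λ_ℓ)‖² : |supp(x)| ≤ σ}` (joint in `x` and `λ`), then there is
`x̃` with `supp(x̃) ⊆ χ` for some `χ ∈ 𝒳` such that `(x̃, λ*)` is also optimal. -/
theorem stmt17 {m n k : ℕ} (A : Matrix (Fin m) (Fin n) ℝ)
    (b : Fin m → ℝ) (c : Fin k → Fin m → ℝ) (σ : ℕ)
    (𝒳 : Set (Finset (Fin n)))
    (h𝒳 : ∀ lam : Fin k → ℝ, ∃ x : Fin n → ℝ,
      Set.ncard {i | x i ≠ 0} ≤ σ ∧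
      (∀ y : Fin n → ℝ, Set.ncard {i | y i ≠ 0} ≤ σ →
        objFn A b c x lam ≤ objFn A b c y lam) ∧
      ∃ χ ∈ 𝒳, {i | x i ≠ 0} ⊆ ↑χ)
    (xs : Fin n → ℝ) (lams : Fin k → ℝ)
    (hfeas : Set.ncard {i | xs i ≠ 0} ≤ σ)
    (hopt : ∀ (y : Fin n → ℝ) (mu : Fin k → ℝ), Set.ncard {i | y i ≠ 0} ≤ σ →
      objFn A b c xs lams ≤ objFn A b c y mu) :
    ∃ x' : Fin n → ℝ,
      (∃ χ ∈ 𝒳, {i | x' i ≠ 0} ⊆ ↑χ) ∧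
      Set.ncard {i | x' i ≠ 0} ≤ σ ∧
      ∀ (y : Fin n → ℝ) (mu : Fin k → ℝ), Set.ncard {i | y i ≠ 0} ≤ σ →
        objFn A b c x' lams ≤ objFn A b c y mu := by
  obtain ⟨x, hx1, hx2, hx3⟩ := h𝒳 lams
  exact ⟨x, hx3, hx1, fun y mu hy =>
    le_trans (hx2 xs hfeas) (hopt y mu hy)⟩
end
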